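/- arXiv:1202.6350 — 9 statements merged into one kernel-verified Lean document; each statement's English description precedes it below -/
import Mathlib

section
/- Suppose Φ = {φ_i}_{i=1}^M and Ψ = {ψ_i}_{i=1}^M are tight frames for K^N that are unitarily equivalent, i.e., there exist a bijection p of {1,…,M}, a unitary N×N matrix U, and scalars c_i ∈ K with |c_i| = c > 0 such that ψ_i = c_i U φ_{p(i)} for all i. Then Φ is prime if and only if Ψ is prime. -/
open Finset

/-- A subcollection `{Φ i : i ∈ J}` of vectors in `K^N` is a tight frame (with some
positive bound `A`): `∑_{i∈J} |⟨x, Φ i⟩|² = A‖x‖²` for all `x`. -/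
def IsTightSub {K : Type*} [RCLike K] {N M : ℕ} (Φ : Fin M → EuclideanSpace K (Fin N))
    (J : Finset (Fin M)) : Prop :=
  ∃ A : ℝ, 0 < A ∧ ∀ x : EuclideanSpace K (Fin N),
    ∑ i ∈ J, ‖(inner K x (Φ i) : K)‖ ^ 2 = A * ‖x‖ ^ 2

/-- A tight frame is prime: it is tight and no proper subcollection is a tight frame. -/
def IsPrimeFrame {K : Type*} [RCLike K] {N M : ℕ}
    (Φ : Fin M → EuclideanSpace K (Fin N)) : Prop :=
  IsTightSub Φ Finset.univ ∧
    ∀ J : Finset (Fin M), J ⊂ Finset.univ → ¬ IsTightSub Φ J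

/-! Each of the three operations making up a unitary equivalence — reindexing by a permutation,
applying a unitary, and scaling the vectors by scalars of one common modulus `c > 0` — maps
tight subcollections to tight subcollections (the frame bound is multiplied by `c²` in the
last case), and is invertible by an operation of the same kind. Hence each one preserves the
family of tight subcollections, and with it primality. -/

section TightFrame

variable {K : Type*} [RCLike K] {N M : ℕ}

theorem isTightSub_comp_perm_iff (Φ : Fin M → EuclideanSpace K (Fin N)) (p : Equiv.Perm (Fin M))
    (J : Finset (Fin M)) : IsTightSub (Φ ∘ p) J ↔ IsTightSub Φ (J.map p.toEmbedding) := by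
  simp only [IsTightSub, sum_map, Function.comp_apply, Equiv.coe_toEmbedding]

theorem IsTightSub.linearIsometryEquiv_comp {Φ : Fin M → EuclideanSpace K (Fin N)}
    {J : Finset (Fin M)} (h : IsTightSub Φ J)
    (U : EuclideanSpace K (Fin N) ≃ₗᵢ[K] EuclideanSpace K (Fin N)) :
    IsTightSub (fun i => U (Φ i)) J := by
  obtain ⟨A, hA, hsum⟩ := h
  refine ⟨A, hA, fun x => ?_⟩
  have hinner : ∀ v, inner K x (U v) = inner K (U.symm x) v := fun v => by
    rw [← U.inner_map_map (U.symm x), U.apply_symm_apply]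
  simpa only [hinner, U.symm.norm_map] using hsum (U.symm x)

theorem isTightSub_linearIsometryEquiv_comp_iff (Φ : Fin M → EuclideanSpace K (Fin N))
    (U : EuclideanSpace K (Fin N) ≃ₗᵢ[K] EuclideanSpace K (Fin N)) (J : Finset (Fin M)) :
    IsTightSub (fun i => U (Φ i)) J ↔ IsTightSub Φ J := by
  refine ⟨fun h => ?_, fun h => h.linearIsometryEquiv_comp U⟩
  simpa only [U.symm_apply_apply] using h.linearIsometryEquiv_comp U.symm

theorem IsTightSub.smul {Φ : Fin M → EuclideanSpace K (Fin N)} {J : Finset (Fin M)}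
    (h : IsTightSub Φ J) {c : Fin M → K} {cc : ℝ} (hcc : 0 < cc) (hc : ∀ i, ‖c i‖ = cc) :
    IsTightSub (fun i => c i • Φ i) J := by
  obtain ⟨A, hA, hsum⟩ := h
  refine ⟨cc ^ 2 * A, by positivity, fun x => ?_⟩
  calc ∑ i ∈ J, ‖(inner K x (c i • Φ i) : K)‖ ^ 2
      = cc ^ 2 * ∑ i ∈ J, ‖(inner K x (Φ i) : K)‖ ^ 2 := by
        simp only [inner_smul_right, norm_mul, hc, mul_pow, mul_sum]
    _ = cc ^ 2 * A * ‖x‖ ^ 2 := by rw [hsum, mul_assoc]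

theorem isTightSub_smul_iff (Φ : Fin M → EuclideanSpace K (Fin N)) {c : Fin M → K} {cc : ℝ}
    (hcc : 0 < cc) (hc : ∀ i, ‖c i‖ = cc) (J : Finset (Fin M)) :
    IsTightSub (fun i => c i • Φ i) J ↔ IsTightSub Φ J := by
  refine ⟨fun h => ?_, fun h => h.smul hcc hc⟩
  have hc₀ : ∀ i, c i ≠ 0 := fun i => norm_ne_zero_iff.mp (by rw [hc i]; exact hcc.ne')
  simpa only [smul_smul, inv_mul_cancel₀ (hc₀ _), one_smul] using
    h.smul (c := fun i => (c i)⁻¹) (inv_pos.mpr hcc) (fun i => by rw [norm_inv, hc])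

theorem isPrimeFrame_congr {Φ Ψ : Fin M → EuclideanSpace K (Fin N)}
    (h : ∀ J, IsTightSub Φ J ↔ IsTightSub Ψ J) : IsPrimeFrame Φ ↔ IsPrimeFrame Ψ := by
  simp only [IsPrimeFrame, h]

theorem isPrimeFrame_comp_perm_iff (Φ : Fin M → EuclideanSpace K (Fin N))
    (p : Equiv.Perm (Fin M)) : IsPrimeFrame (Φ ∘ p) ↔ IsPrimeFrame Φ := by
  have hsub : ∀ J : Finset (Fin M), J ⊂ univ ↔ J.map p.toEmbedding ⊂ univ := fun J => by
    rw [← map_ssubset_map (f := p.toEmbedding), map_univ_equiv]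
  unfold IsPrimeFrame
  rw [isTightSub_comp_perm_iff, map_univ_equiv]
  refine and_congr_right' (p.finsetCongr.forall_congr fun J => ?_)
  rw [hsub, isTightSub_comp_perm_iff, Equiv.finsetCongr_apply]

end TightFrame

theorem prime_iff_of_unitarily_equivalent_general {K : Type*} [RCLike K] {N M : ℕ}
    (Φ Ψ : Fin M → EuclideanSpace K (Fin N))
    (p : Equiv.Perm (Fin M))
    (U : EuclideanSpace K (Fin N) ≃ₗᵢ[K] EuclideanSpace K (Fin N))
    (c : Fin M → K) (cc : ℝ) (hcc : 0 < cc) (hc : ∀ i, ‖c i‖ = cc)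
    (hΨΦ : ∀ i, Ψ i = c i • U (Φ (p i))) :
    IsPrimeFrame Φ ↔ IsPrimeFrame Ψ := by
  obtain rfl : Ψ = fun i => c i • U ((Φ ∘ p) i) := funext hΨΦ
  calc IsPrimeFrame Φ
      ↔ IsPrimeFrame (Φ ∘ p) := (isPrimeFrame_comp_perm_iff Φ p).symm
    _ ↔ IsPrimeFrame fun i => U ((Φ ∘ p) i) :=
        isPrimeFrame_congr fun J => (isTightSub_linearIsometryEquiv_comp_iff _ U J).symm
    _ ↔ IsPrimeFrame fun i => c i • U ((Φ ∘ p) i) :=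
        isPrimeFrame_congr fun J => (isTightSub_smul_iff _ hcc hc J).symm

/-- Primality is preserved by unitary equivalence: if `ψ_i = c_i U φ_{p(i)}` with `p` a
permutation, `U` unitary and `|c_i| = c > 0`, then `Φ` is prime iff `Ψ` is prime. -/
theorem prime_iff_of_unitarily_equivalent {K : Type*} [RCLike K] {N M : ℕ}
    (Φ Ψ : Fin M → EuclideanSpace K (Fin N))
    (hΦ : IsTightSub Φ Finset.univ) (hΨ : IsTightSub Ψ Finset.univ)
    (p : Equiv.Perm (Fin M))
    (U : EuclideanSpace K (Fin N) ≃ₗᵢ[K] EuclideanSpace K (Fin N))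
    (c : Fin M → K) (cc : ℝ) (hcc : 0 < cc) (hc : ∀ i, ‖c i‖ = cc)
    (hΨΦ : ∀ i, Ψ i = c i • U (Φ (p i))) :
    IsPrimeFrame Φ ↔ IsPrimeFrame Ψ :=
  prime_iff_of_unitarily_equivalent_general Φ Ψ p U c cc hcc hc hΨΦ
end

section
/- (Welch bound) Let Φ = {φ_i}_{i=1}^M be a unit-norm tight frame for K^N with M ≥ N ≥ 1. Then max_{i≠j} |⟨φ_i,φ_j⟩| ≥ √((M−N)/(N(M−1))). -/
/-!
Applying tightness to `x = φ i` gives `∑ⱼ |⟨φ i, φ j⟩|² = M / N` for each row of the Gram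
matrix. The diagonal entry is `1` and the other `M - 1` entries are at most the coherence `C`
in modulus, so `M / N ≤ 1 + (M - 1) C²`, which rearranges to the Welch bound.
-/

open Finset

section Coherence

variable {𝕜 E ι : Type*} [RCLike 𝕜] [NormedAddCommGroup E] [InnerProductSpace 𝕜 E]
  [Fintype ι] [DecidableEq ι]

theorem sum_sq_norm_inner_le_one_add (v : ι → E) {i : ι} (hi : ‖v i‖ = 1) {C : ℝ}
    (hC : ∀ j, j ≠ i → ‖(inner 𝕜 (v i) (v j) : 𝕜)‖ ≤ C) :
    ∑ j, ‖(inner 𝕜 (v i) (v j) : 𝕜)‖ ^ 2 ≤ 1 + (Fintype.card ι - 1) * C ^ 2 := by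
  have hdiag : ‖(inner 𝕜 (v i) (v i) : 𝕜)‖ ^ 2 = 1 := by
    rw [inner_self_eq_norm_sq_to_K, hi]
    simp
  have hoff : ∑ j ∈ univ.erase i, ‖(inner 𝕜 (v i) (v j) : 𝕜)‖ ^ 2
      ≤ (Fintype.card ι - 1) * C ^ 2 := by
    calc ∑ j ∈ univ.erase i, ‖(inner 𝕜 (v i) (v j) : 𝕜)‖ ^ 2
        ≤ ∑ _j ∈ univ.erase i, C ^ 2 :=
          sum_le_sum fun j hj => pow_le_pow_left₀ (norm_nonneg _) (hC j (ne_of_mem_erase hj)) 2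
      _ = (Fintype.card ι - 1) * C ^ 2 := by
          rw [sum_const, card_erase_of_mem (mem_univ i), card_univ, nsmul_eq_mul,
            Nat.cast_pred (Fintype.card_pos_iff.2 ⟨i⟩)]
  rw [← add_sum_erase _ _ (mem_univ i), hdiag]
  linarith

end Coherence

-- At `M = 1` the left-hand side is `0` because Lean's `x / 0 = 0`.
theorem sub_div_mul_sub_one_le {M N c : ℝ} (hN : 0 < N) (hM : 1 ≤ M) (hc : 0 ≤ c)
    (h : M / N ≤ 1 + (M - 1) * c) : (M - N) / (N * (M - 1)) ≤ c := by
  rcases hM.eq_or_lt with rfl | hM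
  · simpa using hc
  rw [div_le_iff₀ (by nlinarith), ← sub_nonneg]
  rw [div_le_iff₀ hN] at h
  nlinarith

/-- Welch bound: for a unit-norm tight frame of `M ≥ N` vectors in `K^N`, the worst-case
coherence `max_{i≠j} |⟨φ_i,φ_j⟩|` is at least `√((M−N)/(N(M−1)))`. -/
theorem welch_bound {K : Type*} [RCLike K] {N M : ℕ} (hN : 1 ≤ N) (hNM : N ≤ M)
    (Φ : Fin M → EuclideanSpace K (Fin N)) (hnorm : ∀ i, ‖Φ i‖ = 1)
    (ht : ∀ x : EuclideanSpace K (Fin N),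
      ∑ i, ‖(inner K x (Φ i) : K)‖ ^ 2 = ((M : ℝ) / N) * ‖x‖ ^ 2) :
    Real.sqrt (((M : ℝ) - N) / (N * ((M : ℝ) - 1))) ≤
      ⨆ q : {q : Fin M × Fin M // q.1 ≠ q.2}, ‖(inner K (Φ q.val.1) (Φ q.val.2) : K)‖ := by
  set C := ⨆ q : {q : Fin M × Fin M // q.1 ≠ q.2}, ‖(inner K (Φ q.val.1) (Φ q.val.2) : K)‖
  have hC : ∀ i j, i ≠ j → ‖(inner K (Φ i) (Φ j) : K)‖ ≤ C := fun i j hij =>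
    le_ciSup (f := fun q : {q : Fin M × Fin M // q.1 ≠ q.2} =>
      ‖(inner K (Φ q.val.1) (Φ q.val.2) : K)‖) (Set.finite_range _).bddAbove ⟨(i, j), hij⟩
  have hC0 : 0 ≤ C := Real.iSup_nonneg fun _ => norm_nonneg _
  have hM : 1 ≤ M := hN.trans hNM
  let i₀ : Fin M := ⟨0, hM⟩
  have hrow : ((M : ℝ) / N) ≤ 1 + ((M : ℝ) - 1) * C ^ 2 := by
    have h := sum_sq_norm_inner_le_one_add Φ (hnorm i₀) fun j hj => hC i₀ j hj.symm
    rwa [ht, hnorm, one_pow, mul_one, Fintype.card_fin] at h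
  rw [Real.sqrt_le_left hC0]
  exact sub_div_mul_sub_one_le (by exact_mod_cast hN) (by exact_mod_cast hM) (sq_nonneg C) hrow
end

section
/- Let N ≥ 2 and let Φ = {φ_i}_{i=1}^M be an equiangular unit-norm tight frame for K^N, i.e., there exists c ≥ 0 with |⟨φ_i,φ_j⟩| = c for all i ≠ j. Then Φ is prime: no proper subcollection of Φ is a tight frame for K^N. -/
/-!
Suppose the subframe indexed by `J` is tight with bound `A`, and pick `i ∉ J` and `j ∈ J`.
Testing tightness at `Φ i` and at `Φ j` gives `A = #J c²` and `A = 1 + (#J - 1) c²`, so `c = 1`.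
By the equality case of Cauchy–Schwarz every `Φ k`, `k ∈ J`, is then parallel to `Φ i`, so a
nonzero vector orthogonal to `Φ i` (one exists since `N ≥ 2`) is orthogonal to the whole
subframe, which tightness forbids.
-/

open Finset Module
open scoped InnerProductSpace

section

variable {𝕜 E : Type*} [RCLike 𝕜] [NormedAddCommGroup E] [InnerProductSpace 𝕜 E]

lemma exists_ne_zero_inner_eq_zero [FiniteDimensional 𝕜 E] (hE : 2 ≤ finrank 𝕜 E) (v : E) :
    ∃ x : E, x ≠ 0 ∧ ⟪x, v⟫_𝕜 = 0 := by
  have hline : finrank 𝕜 (𝕜 ∙ v) ≤ 1 :=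
    (finrank_span_le_card ({v} : Set E)).trans (by simp)
  have hperp : (𝕜 ∙ v)ᗮ ≠ ⊥ := by
    intro h
    have := (𝕜 ∙ v).finrank_add_finrank_orthogonal
    rw [h, finrank_bot] at this
    omega
  obtain ⟨x, hx, hx0⟩ := Submodule.exists_mem_ne_zero_of_ne_bot hperp
  exact ⟨x, hx0, Submodule.mem_orthogonal_singleton_iff_inner_left.mp hx⟩

lemma inner_eq_zero_of_norm_inner_eq_one {u v x : E} (hu : ‖u‖ = 1) (hv : ‖v‖ = 1)
    (huv : ‖⟪u, v⟫_𝕜‖ = 1) (hx : ⟪x, u⟫_𝕜 = 0) : ⟪x, v⟫_𝕜 = 0 := by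
  have hu0 : u ≠ 0 := by rintro rfl; simp at hu
  have hv0 : v ≠ 0 := by rintro rfl; simp at hv
  obtain ⟨r, -, rfl⟩ := (norm_inner_eq_norm_iff hu0 hv0).mp (by rw [huv, hu, hv, one_mul])
  rw [inner_smul_right, hx, mul_zero]

lemma exists_inner_ne_zero_of_tight {ι : Type*} {Φ : ι → E} {J : Finset ι} {A : ℝ} (hA : 0 < A)
    (htight : ∀ x, ∑ j ∈ J, ‖⟪x, Φ j⟫_𝕜‖ ^ 2 = A * ‖x‖ ^ 2) {x : E} (hx : x ≠ 0) :
    ∃ j ∈ J, ⟪x, Φ j⟫_𝕜 ≠ 0 := by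
  by_contra! h
  have hzero := htight x
  rw [sum_eq_zero fun j hj => by simp [h j hj]] at hzero
  have hpos : 0 < A * ‖x‖ ^ 2 := by positivity
  linarith

variable {ι : Type*} {Φ : ι → E} {c : ℝ}

lemma sum_norm_inner_sq_of_notMem (heq : ∀ i j, i ≠ j → ‖⟪Φ i, Φ j⟫_𝕜‖ = c) {J : Finset ι}
    {i : ι} (hi : i ∉ J) : ∑ j ∈ J, ‖⟪Φ i, Φ j⟫_𝕜‖ ^ 2 = #J * c ^ 2 := by
  rw [sum_congr rfl fun j hj => by rw [heq i j (ne_of_mem_of_not_mem hj hi).symm], sum_const,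
    nsmul_eq_mul]

lemma sum_norm_inner_sq_of_mem [DecidableEq ι] (hnorm : ∀ i, ‖Φ i‖ = 1)
    (heq : ∀ i j, i ≠ j → ‖⟪Φ i, Φ j⟫_𝕜‖ = c) {J : Finset ι} {i : ι} (hi : i ∈ J) :
    ∑ j ∈ J, ‖⟪Φ i, Φ j⟫_𝕜‖ ^ 2 = 1 + (#J - 1 : ℝ) * c ^ 2 := by
  rw [← add_sum_erase _ _ hi, sum_norm_inner_sq_of_notMem heq (notMem_erase i J),
    inner_self_eq_norm_sq_to_K, hnorm, card_erase_of_mem hi, Nat.cast_pred (card_pos.mpr ⟨i, hi⟩)]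
  simp

end

theorem equiangular_funtf_is_prime_general {K : Type*} [RCLike K] {N M : ℕ} (hN : 2 ≤ N)
    (Φ : Fin M → EuclideanSpace K (Fin N)) (hnorm : ∀ i, ‖Φ i‖ = 1)
    (c : ℝ) (heq : ∀ i j, i ≠ j → ‖(inner K (Φ i) (Φ j) : K)‖ = c) :
    ∀ J : Finset (Fin M), J ⊂ Finset.univ → ¬ IsTightSub Φ J := by
  rintro J hJ ⟨A, hA, htight⟩
  obtain ⟨i, -, hi⟩ := exists_of_ssubset hJ
  have hΦi : Φ i ≠ 0 := by rintro h; simpa [h] using hnorm i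
  obtain ⟨j, hj, -⟩ := exists_inner_ne_zero_of_tight hA htight hΦi
  have hc : c ^ 2 = 1 := by
    have hout := htight (Φ i)
    have hin := htight (Φ j)
    rw [sum_norm_inner_sq_of_notMem heq hi, hnorm] at hout
    rw [sum_norm_inner_sq_of_mem hnorm heq hj, hnorm] at hin
    linear_combination hout - hin
  have hparallel : ∀ k ∈ J, ‖⟪Φ i, Φ k⟫_K‖ = 1 := fun k hk => by
    rw [← pow_eq_one_iff_of_nonneg (norm_nonneg _) two_ne_zero,
      heq i k (ne_of_mem_of_not_mem hk hi).symm, hc]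
  obtain ⟨x, hx, hxi⟩ :=
    exists_ne_zero_inner_eq_zero (by rwa [finrank_euclideanSpace_fin]) (Φ i)
  obtain ⟨k, hk, hxk⟩ := exists_inner_ne_zero_of_tight hA htight hx
  exact hxk (inner_eq_zero_of_norm_inner_eq_one (hnorm i) (hnorm k) (hparallel k hk) hxi)

/-- Equiangular unit-norm tight frames in `K^N`, `N ≥ 2`, are prime. -/
theorem equiangular_funtf_is_prime {K : Type*} [RCLike K] {N M : ℕ} (hN : 2 ≤ N)
    (Φ : Fin M → EuclideanSpace K (Fin N)) (hnorm : ∀ i, ‖Φ i‖ = 1)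
    (ht : ∀ x : EuclideanSpace K (Fin N),
      ∑ i, ‖(inner K x (Φ i) : K)‖ ^ 2 = ((M : ℝ) / N) * ‖x‖ ^ 2)
    (c : ℝ) (hc : 0 ≤ c)
    (heq : ∀ i j, i ≠ j → ‖(inner K (Φ i) (Φ j) : K)‖ = c) :
    ∀ J : Finset (Fin M), J ⊂ Finset.univ → ¬ IsTightSub Φ J :=
  equiangular_funtf_is_prime_general hN Φ hnorm c heq
end

section
/- Let M ≥ 4 and let Φ = {φ_k}_{k=1}^M ⊂ ℂ² be the harmonic tight frame with φ_{k+1} = (1/√2)(1, γ^k)ᵗ, γ = e^{2πi/M}, k = 0,…,M−1. Then Φ is prime if and only if M is a prime number. -/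
/-!
Write `Φ k = (1, z k) / √2` with `‖z k‖ = 1`. For a subcollection `J` the frame sum is
`#J / 2 * ‖x‖² + Re (conj (x 0) * x 1 * conj S)` with `S = ∑ k ∈ J, z k`, so `J` is tight exactly
when it is nonempty and `S = 0`. For the harmonic frame `S` is a sum of distinct `M`-th roots of
unity. If `M = a * b` is composite, the multiples of `b` give the `a`-th roots of unity, a proper
vanishing subsum. If `M` is prime, `∑ k ∈ J, X ^ k` is divisible by the minimal polynomial
`1 + X + ⋯ + X ^ (M - 1)` of `γ` and has degree `< M`, so it is `0` or that polynomial.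
-/

open Finset

open ComplexConjugate

lemma norm_inner_sq_eq_of_unit_modulus {φ : EuclideanSpace ℂ (Fin 2)} {w : ℂ} (hw : ‖w‖ = 1)
    (hφ0 : φ 0 = 1 / (Real.sqrt 2 : ℂ)) (hφ1 : φ 1 = 1 / (Real.sqrt 2 : ℂ) * w)
    (x : EuclideanSpace ℂ (Fin 2)) :
    ‖(inner ℂ x φ : ℂ)‖ ^ 2 = ‖x‖ ^ 2 / 2 + (conj (x 0) * x 1 * conj w).re := by
  have hinner : (inner ℂ x φ : ℂ) = (conj (x 0) + conj (x 1) * w) / (Real.sqrt 2 : ℂ) := by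
    simp only [PiLp.inner_apply, RCLike.inner_apply, Fin.sum_univ_two, hφ0, hφ1]
    ring
  have hsqrt : Complex.normSq (Real.sqrt 2 : ℂ) = 2 := by
    rw [Complex.normSq_ofReal, Real.mul_self_sqrt zero_le_two]
  rw [EuclideanSpace.norm_sq_eq, Fin.sum_univ_two, hinner, Complex.sq_norm, Complex.sq_norm,
    Complex.sq_norm, map_div₀, hsqrt, Complex.normSq_add, map_mul, Complex.normSq_conj,
    Complex.normSq_conj, ← Complex.sq_norm w, hw, map_mul, Complex.conj_conj]
  ring_nf

section UnitModulus

variable {M : ℕ} {Φ : Fin M → EuclideanSpace ℂ (Fin 2)} {z : Fin M → ℂ}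

lemma sum_norm_inner_sq_eq_of_unit_modulus (hz : ∀ i, ‖z i‖ = 1)
    (hΦ0 : ∀ i, Φ i 0 = 1 / (Real.sqrt 2 : ℂ)) (hΦ1 : ∀ i, Φ i 1 = 1 / (Real.sqrt 2 : ℂ) * z i)
    (J : Finset (Fin M)) (x : EuclideanSpace ℂ (Fin 2)) :
    ∑ i ∈ J, ‖(inner ℂ x (Φ i) : ℂ)‖ ^ 2 =
      #J / 2 * ‖x‖ ^ 2 + (conj (x 0) * x 1 * conj (∑ i ∈ J, z i)).re := by
  simp only [norm_inner_sq_eq_of_unit_modulus (hz _) (hΦ0 _) (hΦ1 _), sum_add_distrib,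
    sum_const, nsmul_eq_mul, map_sum, mul_sum, Complex.re_sum]
  ring

lemma isTightSub_iff_of_unit_modulus (hz : ∀ i, ‖z i‖ = 1)
    (hΦ0 : ∀ i, Φ i 0 = 1 / (Real.sqrt 2 : ℂ)) (hΦ1 : ∀ i, Φ i 1 = 1 / (Real.sqrt 2 : ℂ) * z i)
    (J : Finset (Fin M)) :
    IsTightSub Φ J ↔ J.Nonempty ∧ ∑ i ∈ J, z i = 0 := by
  have hsum := sum_norm_inner_sq_eq_of_unit_modulus hz hΦ0 hΦ1 J
  set S := ∑ i ∈ J, z i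
  constructor
  · rintro ⟨A, hA, hAx⟩
    -- Testing on `(1, 0)` pins down `A = #J / 2`; testing on `(1, S)` then leaves `‖S‖² = 0`.
    have hA_eq : A = #J / 2 := by
      simpa [EuclideanSpace.norm_sq_eq] using (hAx !₂[1, 0]).symm.trans (hsum !₂[1, 0])
    refine ⟨card_pos.mp (by exact_mod_cast (by linarith : (0 : ℝ) < #J)), ?_⟩
    simpa [EuclideanSpace.norm_sq_eq, hA_eq, Complex.mul_conj] using
      (hAx !₂[1, S]).symm.trans (hsum !₂[1, S])
  · rintro ⟨hJ, hS⟩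
    exact ⟨#J / 2, by positivity, fun x => by simp [hsum, hS]⟩

end UnitModulus

open Polynomial in
lemma IsPrimitiveRoot.eq_empty_or_univ_of_sum_pow_eq_zero {K : Type*} [Field K] [CharZero K]
    {p : ℕ} [hp : Fact p.Prime] {ζ : K} (hζ : IsPrimitiveRoot ζ p) {J : Finset (Fin p)}
    (hJ : ∑ k ∈ J, ζ ^ (k : ℕ) = 0) : J = ∅ ∨ J = univ := by
  set P : ℚ[X] := ∑ k ∈ J, X ^ (k : ℕ)
  have hdvd : cyclotomic p ℚ ∣ P := by
    rw [cyclotomic_eq_minpoly_rat hζ hp.out.pos]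
    exact minpoly.dvd ℚ ζ (by simpa [P] using hJ)
  have hdeg : P.natDegree ≤ (cyclotomic p ℚ).natDegree := by
    rw [natDegree_cyclotomic, Nat.totient_prime hp.out]
    exact natDegree_sum_le_of_forall_le _ _ fun k _ => by
      rw [natDegree_X_pow]; exact Nat.le_pred_of_lt k.isLt
  -- `P` is a constant multiple of `1 + X + ⋯ + X^(p-1)`, so its `0/1` coefficients are all equal.
  have hcoeff : ∀ k : Fin p, (if k ∈ J then 1 else 0 : ℚ) = P.leadingCoeff := by
    intro k
    have hP := congrArg (coeff · k)
      (eq_leadingCoeff_mul_of_monic_of_dvd_of_natDegree_le (cyclotomic.monic p ℚ) hdvd hdeg)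
    simpa [P, cyclotomic_prime, finsetSum_coeff, coeff_X_pow, Fin.val_inj] using hP
  by_cases hc : P.leadingCoeff = 1
  · exact .inr <| eq_univ_of_forall fun k => by by_contra hk; simpa [hk, hc] using hcoeff k
  · exact .inl <| eq_empty_of_forall_notMem fun k hk => hc <| by simpa [hk] using (hcoeff k).symm

lemma IsPrimitiveRoot.exists_sum_pow_eq_zero_of_not_prime {R : Type*} [CommRing R] [IsDomain R]
    {M : ℕ} {ζ : R} (hζ : IsPrimitiveRoot ζ M) (hM : 2 ≤ M) (hM_prime : ¬ M.Prime) :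
    ∃ J : Finset (Fin M), J.Nonempty ∧ J ⊂ univ ∧ ∑ k ∈ J, ζ ^ (k : ℕ) = 0 := by
  obtain ⟨a, b, ha, hb, rfl⟩ := (Nat.not_prime_iff_exists_mul_eq hM).mp hM_prime
  have ha1 : 1 < a := by by_contra!; interval_cases a <;> omega
  have hb0 : 0 < b := Nat.pos_of_ne_zero (by rintro rfl; omega)
  let multiples : Fin a ↪ Fin (a * b) :=
    ⟨fun i => ⟨i * b, Nat.mul_lt_mul_of_pos_right i.isLt hb0⟩,
      fun i j h => Fin.ext (Nat.eq_of_mul_eq_mul_right hb0 (Fin.val_eq_of_eq h))⟩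
  refine ⟨univ.map multiples, univ_nonempty_iff.mpr ⟨⟨0, by omega⟩⟩ |>.map, ?_, ?_⟩
  · refine ssubset_univ_iff.mpr fun h => ?_
    have hcard := congrArg card h
    simp only [card_map, card_univ, Fintype.card_fin] at hcard
    omega
  · have hζb : IsPrimitiveRoot (ζ ^ b) a := hζ.pow (by omega) (mul_comm a b)
    simp only [sum_map, multiples, Function.Embedding.coeFn_mk, mul_comm _ b, pow_mul]
    rw [Fin.sum_univ_eq_sum_range (fun i => (ζ ^ b) ^ i), hζb.geom_sum_eq_zero ha1]

/-- The harmonic tight frame of `M ≥ 4` vectors in `ℂ²` is prime iff `M` is prime. -/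
theorem htf_dim_two_prime_iff {M : ℕ} (hM : 4 ≤ M)
    (γ : ℂ) (hγ : γ = Complex.exp (2 * Real.pi * Complex.I / M))
    (Φ : Fin M → EuclideanSpace ℂ (Fin 2))
    (hΦ : ∀ (k : Fin M) (n : Fin 2),
      Φ k n = (1 / (Real.sqrt 2 : ℂ)) * γ ^ ((n : ℕ) * (k : ℕ))) :
    (∀ J : Finset (Fin M), J ⊂ Finset.univ → ¬ IsTightSub Φ J) ↔ Nat.Prime M := by
  have hγ_prim : IsPrimitiveRoot γ M := hγ ▸ Complex.isPrimitiveRoot_exp M (by omega)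
  have htight (J : Finset (Fin M)) : IsTightSub Φ J ↔ J.Nonempty ∧ ∑ k ∈ J, γ ^ (k : ℕ) = 0 :=
    isTightSub_iff_of_unit_modulus
      (fun k => by rw [norm_pow, hγ_prim.norm'_eq_one (by omega), one_pow])
      (fun k => by simpa using hΦ k 0) (fun k => by simpa using hΦ k 1) J
  constructor
  · intro hΦ_prime
    by_contra hM_prime
    obtain ⟨J, hJ, hJ_univ, hJ_sum⟩ :=
      hγ_prim.exists_sum_pow_eq_zero_of_not_prime (by omega) hM_prime
    exact hΦ_prime J hJ_univ ((htight J).mpr ⟨hJ, hJ_sum⟩)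
  · intro hM_prime J hJ_univ hJ_tight
    have := Fact.mk hM_prime
    obtain ⟨hJ, hJ_sum⟩ := (htight J).mp hJ_tight
    rcases hγ_prim.eq_empty_or_univ_of_sum_pow_eq_zero hJ_sum with rfl | rfl
    · exact not_nonempty_empty hJ
    · exact hJ_univ.ne rfl
end

section
/- Let N, M ∈ ℕ with N ≥ 1 and let Φ be the harmonic tight frame of M vectors in ℂ^N (φ_{k+1} having n-th entry (1/√N)γ^{(n−1)k}, γ = e^{2πi/M}). If d is a divisor of M with N ≤ d ≤ M − N, then the subcollection {φ_i : i ∈ I(d,1)}, where I(d,1) = {kM/d + 1 : k = 0,1,…,d−1}, is a tight frame for ℂ^N (with bound d/N); in particular Φ is (M,d)-divisible for every divisor d of M with N ≤ d ≤ M − N. -/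
/-! Since `m = M / d` and `γ` is a primitive `M`-th root of unity, `ω = γ ^ m` is a primitive
`d`-th root of unity, and the vectors indexed by the multiples of `m` are the `d` vectors
`(ω ^ (n k))_n / √N` of the harmonic frame of `d` vectors. Their frame operator
`x ↦ ∑ₖ ⟪vₖ, x⟫ vₖ` is `(d / N) • id`, because for `n, p < N ≤ d` the character sums
`∑ₖ ω ^ ((p - n) k)` vanish unless `n = p`. -/

open Finset

open ComplexConjugate

theorem IsPrimitiveRoot.sum_conj_pow_mul_pow {ω : ℂ} {d n p : ℕ} (hω : IsPrimitiveRoot ω d)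
    (hn : n < d) (hp : p < d) :
    ∑ k : Fin d, conj (ω ^ (n * k)) * ω ^ (p * k) = if n = p then (d : ℂ) else 0 := by
  have hω0 : ω ≠ 0 := hω.ne_zero (by omega)
  have hconj : conj ω = ω⁻¹ := (RCLike.inv_eq_conj (hω.norm'_eq_one (by omega))).symm
  set ζ := ω ^ p / ω ^ n with hζ
  have hterm (k : ℕ) : conj (ω ^ (n * k)) * ω ^ (p * k) = ζ ^ k := by
    rw [map_pow, hconj, hζ, div_pow, inv_pow, ← pow_mul, ← pow_mul, div_eq_mul_inv,
      mul_comm p, mul_comm n, mul_comm]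
  rw [Fin.sum_univ_eq_sum_range (fun k => conj (ω ^ (n * k)) * ω ^ (p * k)),
    sum_congr rfl fun k _ => hterm k]
  split_ifs with hnp
  · simp [hζ, hnp, hω0]
  · have hζ1 : ζ ≠ 1 := fun h =>
      hnp (hω.pow_inj hn hp ((div_eq_one_iff_eq (pow_ne_zero n hω0)).mp h).symm)
    have hζd : ζ ^ d = 1 := by
      rw [hζ, div_pow, ← pow_mul, ← pow_mul, mul_comm p, mul_comm n, pow_mul, pow_mul,
        hω.pow_eq_one, one_pow, one_pow, div_one]
    rw [geom_sum_eq hζ1, hζd, sub_self, zero_div]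

theorem sum_norm_inner_sq_eq_of_sum_inner_smul_eq {𝕜 E ι : Type*} [RCLike 𝕜]
    [NormedAddCommGroup E] [InnerProductSpace 𝕜 E] [Fintype ι] {v : ι → E} {A : ℝ} {x : E}
    (h : ∑ i, inner 𝕜 (v i) x • v i = (A : 𝕜) • x) :
    ∑ i, ‖inner 𝕜 x (v i)‖ ^ 2 = A * ‖x‖ ^ 2 := by
  apply RCLike.ofReal_injective (K := 𝕜)
  push_cast
  calc ∑ i, (‖inner 𝕜 x (v i)‖ : 𝕜) ^ 2 = ∑ i, inner 𝕜 (v i) x * inner 𝕜 x (v i) := by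
        simp only [← RCLike.conj_mul, inner_conj_symm]
    _ = inner 𝕜 x ((A : 𝕜) • x) := by simp only [← h, inner_sum, inner_smul_right]
    _ = A * ‖x‖ ^ 2 := by rw [inner_smul_right, inner_self_eq_norm_sq_to_K]

theorem sum_inner_smul_eq_of_eq_pow {ω : ℂ} {d N : ℕ} (hω : IsPrimitiveRoot ω d)
    (hNd : N ≤ d) {c : ℂ} {v : Fin d → EuclideanSpace ℂ (Fin N)}
    (hv : ∀ k n, v k n = c * ω ^ ((n : ℕ) * k)) (x : EuclideanSpace ℂ (Fin N)) :
    ∑ k, inner ℂ (v k) x • v k = ((‖c‖ ^ 2 * d : ℝ) : ℂ) • x := by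
  ext n
  simp only [WithLp.ofLp_sum, WithLp.ofLp_smul, Finset.sum_apply, Pi.smul_apply, smul_eq_mul,
    PiLp.inner_apply, RCLike.inner_apply, hv]
  calc ∑ k : Fin d, (∑ p : Fin N, x p * conj (c * ω ^ ((p : ℕ) * k))) * (c * ω ^ ((n : ℕ) * k))
      = ∑ p : Fin N, ((‖c‖ ^ 2 : ℝ) : ℂ) * x p *
          ∑ k : Fin d, conj (ω ^ ((p : ℕ) * k)) * ω ^ ((n : ℕ) * k) := by
        simp only [sum_mul, mul_sum, map_mul]
        rw [sum_comm]
        refine sum_congr rfl fun p _ => sum_congr rfl fun k _ => ?_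
        rw [Complex.ofReal_pow, ← Complex.conj_mul']
        ring
    _ = ∑ p : Fin N, ((‖c‖ ^ 2 : ℝ) : ℂ) * x p * if (p : ℕ) = n then (d : ℂ) else 0 := by
        refine sum_congr rfl fun p _ => ?_
        rw [hω.sum_conj_pow_mul_pow (p.2.trans_le hNd) (n.2.trans_le hNd)]
    _ = ((‖c‖ ^ 2 * d : ℝ) : ℂ) * x n := by
        simp only [Fin.val_inj, mul_ite, mul_zero, sum_ite_eq', mem_univ]
        push_cast
        ring

def multiplesEmbedding (d : ℕ) {m : ℕ} (hm : 0 < m) : Fin d ↪ Fin (d * m) where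
  toFun k := ⟨m * k, by rw [mul_comm d]; exact Nat.mul_lt_mul_of_pos_left k.2 hm⟩
  inj' _ _ h := Fin.ext (Nat.eq_of_mul_eq_mul_left hm (Fin.mk.inj_iff.mp h))

@[simp]
theorem multiplesEmbedding_apply_val (d : ℕ) {m : ℕ} (hm : 0 < m) (k : Fin d) :
    (multiplesEmbedding d hm k : ℕ) = m * k :=
  rfl

theorem filter_dvd_eq_map_multiplesEmbedding (d : ℕ) {m : ℕ} (hm : 0 < m) :
    univ.filter (fun i : Fin (d * m) => m ∣ (i : ℕ)) = univ.map (multiplesEmbedding d hm) := by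
  ext i
  simp only [mem_filter, mem_univ, true_and, mem_map]
  constructor
  · rintro ⟨k, hk⟩
    have hkd : k < d := by
      have := i.2
      rw [hk, mul_comm d] at this
      exact Nat.lt_of_mul_lt_mul_left this
    exact ⟨⟨k, hkd⟩, Fin.ext hk.symm⟩
  · rintro ⟨k, -, rfl⟩
    exact dvd_mul_right m k

/-- For any divisor `d` of `M` with `N ≤ d ≤ M − N`, the subcollection of the harmonic
tight frame indexed by `I(d,1)` (the multiples of `M/d`) is a tight frame with bound
`d/N`; in particular the harmonic frame is `(M,d)`-divisible. -/
theorem htf_divisible_at_divisors {N M : ℕ} (hN : 1 ≤ N)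
    (d : ℕ) (hdvd : d ∣ M) (hd1 : N ≤ d) (hd2 : d ≤ M - N)
    (γ : ℂ) (hγ : γ = Complex.exp (2 * Real.pi * Complex.I / M))
    (Φ : Fin M → EuclideanSpace ℂ (Fin N))
    (hΦ : ∀ (k : Fin M) (n : Fin N),
      Φ k n = (1 / (Real.sqrt N : ℂ)) * γ ^ ((n : ℕ) * (k : ℕ))) :
    (∀ x : EuclideanSpace ℂ (Fin N),
      ∑ i ∈ Finset.univ.filter (fun i : Fin M => (M / d) ∣ (i : ℕ)),
        ‖(inner ℂ x (Φ i) : ℂ)‖ ^ 2 = ((d : ℝ) / N) * ‖x‖ ^ 2) ∧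
    ∃ J : Finset (Fin M), J.card = d ∧ IsTightSub Φ J := by
  obtain ⟨m, rfl⟩ := hdvd
  have hd : 0 < d := by omega
  have hm : 0 < m := Nat.pos_of_ne_zero fun hm => by simp [hm] at hd2; omega
  rw [Nat.mul_div_cancel_left m hd, filter_dvd_eq_map_multiplesEmbedding d hm]
  have hω : IsPrimitiveRoot (γ ^ m) d :=
    (hγ ▸ Complex.isPrimitiveRoot_exp (d * m) (by positivity)).pow (by positivity) (mul_comm d m)
  set c : ℂ := 1 / (Real.sqrt N : ℂ) with hc
  have hc_norm : ‖c‖ ^ 2 * d = d / N := by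
    rw [hc, norm_div, norm_one, Complex.norm_real, Real.norm_of_nonneg (Real.sqrt_nonneg _),
      div_pow, one_pow, Real.sq_sqrt (Nat.cast_nonneg N), one_div_mul_eq_div]
  have hv (k : Fin d) (n : Fin N) :
      Φ (multiplesEmbedding d hm k) n = c * (γ ^ m) ^ ((n : ℕ) * k) := by
    rw [hΦ, multiplesEmbedding_apply_val]
    ring
  have htight (x : EuclideanSpace ℂ (Fin N)) :
      ∑ i ∈ univ.map (multiplesEmbedding d hm), ‖inner ℂ x (Φ i)‖ ^ 2 = (d / N) * ‖x‖ ^ 2 := by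
    rw [sum_map, ← hc_norm]
    exact sum_norm_inner_sq_eq_of_sum_inner_smul_eq (sum_inner_smul_eq_of_eq_pow hω hd1 hv x)
  exact ⟨htight, _, by simp, d / N, by positivity, htight⟩
end

section
/- Let N, M ∈ ℕ, N ≥ 2, and let Φ be the harmonic tight frame of M vectors in ℂ^N. If Φ is divisible (some proper subcollection is a tight frame for ℂ^N), then M has a divisor d with N ≤ d ≤ M − N. Conversely, if M has such a divisor, Φ is divisible. Hence Φ is prime if and only if D_{M,N} := {d : d | M, N ≤ d ≤ M − N} is empty; in particular if M is prime then Φ is prime. -/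
/-!
Tightness of `{Φ k}_{k ∈ J}` says that the frame operator `∑_{k ∈ J} ⟪Φ k, ·⟫ Φ k` is a positive
multiple of the identity (by polarization), i.e. that `∑_{k ∈ J} conj (Φ k n) * Φ k m` vanishes for
`n ≠ m` and is independent of `n` for `n = m`. For the harmonic frame this sum is
`N⁻¹ ∑_{k ∈ J} (γ ^ (m - n)) ^ k`.

If `d ∣ M` and `N ≤ d`, take for `J` the multiples of `M / d`: then `γ ^ (M / d)` is a primitive
`d`-th root of unity and the sums become `N⁻¹ d δ_{nm}`.

Conversely, a tight `J` makes `P = ∑_{k ∈ J} X ^ k ∈ ℚ[X]` vanish at `γ ^ j` for `0 < j < N`. A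
proper divisor of `M` is at most `M / 2`, so if none lies in `[N, M - N]`, all of them are below
`N`. Each `γ ^ t` with `0 < t < M` has the same order as `γ ^ gcd(M, t)`, hence the same
(cyclotomic) minimal polynomial over `ℚ`, so `P` vanishes at every nontrivial `M`-th root of
unity. Summing `P (γ ^ t)` over all `t` gives `#J = M · [0 ∈ J]`: `J` is empty or everything.
-/

open Finset

open InnerProductSpace ComplexConjugate

section FrameOperator

variable (K : Type*) {E ι : Type*} [RCLike K] [NormedAddCommGroup E] [InnerProductSpace K E]

noncomputable def frameOperator (Φ : ι → E) (J : Finset ι) : E →L[K] E :=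
  ∑ k ∈ J, rankOne K (Φ k) (Φ k)

variable {K} (Φ : ι → E) (J : Finset ι)

theorem frameOperator_apply (x : E) :
    frameOperator K Φ J x = ∑ k ∈ J, inner K (Φ k) x • Φ k := by
  simp [frameOperator]

theorem isSymmetric_frameOperator : (frameOperator K Φ J).toLinearMap.IsSymmetric := by
  rw [frameOperator, ContinuousLinearMap.toLinearMap_sum]
  exact LinearMap.isSymmetric_sum J fun k _ => isSymmetric_rankOne_self (Φ k)

theorem inner_frameOperator_self (x : E) :
    inner K (frameOperator K Φ J x) x = ((∑ k ∈ J, ‖(inner K x (Φ k) : K)‖ ^ 2 : ℝ) : K) := by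
  simp only [frameOperator_apply, sum_inner, inner_smul_left, inner_conj_symm]
  push_cast
  refine sum_congr rfl fun k _ => ?_
  rw [← inner_conj_symm x, RCLike.conj_mul, RCLike.norm_conj]

theorem frameOperator_eq_smul_one_iff (A : ℝ) :
    frameOperator K Φ J = (A : K) • 1 ↔
      ∀ x, ∑ k ∈ J, ‖(inner K x (Φ k) : K)‖ ^ 2 = A * ‖x‖ ^ 2 := by
  have hsymm : (frameOperator K Φ J - (A : K) • 1).toLinearMap.IsSymmetric := by
    refine (isSymmetric_frameOperator Φ J).sub (LinearMap.IsSymmetric.one.smul ?_)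
    exact RCLike.conj_ofReal A
  rw [← sub_eq_zero, ← ContinuousLinearMap.coe_inj, ContinuousLinearMap.toLinearMap_zero,
    ← hsymm.inner_map_self_eq_zero]
  refine forall_congr' fun x => ?_
  simp only [ContinuousLinearMap.toLinearMap_sub, ContinuousLinearMap.toLinearMap_smul,
    ContinuousLinearMap.toLinearMap_one, LinearMap.sub_apply, ContinuousLinearMap.coe_coe,
    LinearMap.smul_apply, Module.End.one_apply, inner_sub_left, inner_frameOperator_self,
    inner_smul_left, RCLike.conj_ofReal, inner_self_eq_norm_sq_to_K, sub_eq_zero]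
  norm_cast

end FrameOperator

section Euclidean

variable {K ι : Type*} [RCLike K] {N : ℕ} (Φ : ι → EuclideanSpace K (Fin N)) (J : Finset ι)

theorem frameOperator_apply_apply (x : EuclideanSpace K (Fin N)) (m : Fin N) :
    frameOperator K Φ J x m = ∑ n, (∑ k ∈ J, conj (Φ k n) * Φ k m) * x n := by
  simp only [frameOperator_apply, WithLp.ofLp_sum, Finset.sum_apply, PiLp.smul_apply, smul_eq_mul,
    PiLp.inner_apply, RCLike.inner_apply, sum_mul]
  rw [sum_comm]
  refine sum_congr rfl fun k _ => sum_congr rfl fun n _ => by ring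

theorem frameOperator_eq_smul_one_iff_sum_conj_mul (c : K) :
    frameOperator K Φ J = c • 1 ↔
      ∀ n m, ∑ k ∈ J, conj (Φ k n) * Φ k m = if n = m then c else 0 := by
  constructor
  · intro h n m
    have := congr($h (EuclideanSpace.single n 1) m)
    simpa [frameOperator_apply_apply, PiLp.single_apply, eq_comm] using this
  · intro h
    ext x m
    simp [frameOperator_apply_apply, h]

theorem isTightSub_iff {M : ℕ} (Φ : Fin M → EuclideanSpace K (Fin N)) (J : Finset (Fin M)) :
    IsTightSub Φ J ↔ ∃ A : ℝ, 0 < A ∧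
      ∀ n m, ∑ k ∈ J, conj (Φ k n) * Φ k m = if n = m then (A : K) else 0 := by
  simp_rw [IsTightSub, ← frameOperator_eq_smul_one_iff, frameOperator_eq_smul_one_iff_sum_conj_mul]

theorem IsTightSub.nonempty {M : ℕ} {Φ : Fin M → EuclideanSpace K (Fin N)} {J : Finset (Fin M)}
    (hT : IsTightSub Φ J) (hN : 0 < N) : J.Nonempty := by
  obtain ⟨A, hA, h⟩ := hT
  rw [nonempty_iff_ne_empty]
  rintro rfl
  simpa using (h (EuclideanSpace.single ⟨0, hN⟩ 1)).symm.trans_lt hA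

end Euclidean

theorem Nat.le_sub_of_dvd_of_lt {g M N : ℕ} (hg : g ∣ M) (hgM : g < M) (hNg : N ≤ g) :
    g ≤ M - N := by
  obtain ⟨e, rfl⟩ := hg
  have he : 2 ≤ e := by
    rcases e with _ | _ | e <;> simp_all
  have : g * 2 ≤ g * e := Nat.mul_le_mul_left g he
  omega

theorem geom_sum_eq_zero_of_pow_eq_one {R : Type*} [CommRing R] [IsDomain R] {ω : R} {n : ℕ}
    (hω : ω ^ n = 1) (h1 : ω ≠ 1) : ∑ i ∈ range n, ω ^ i = 0 :=
  eq_zero_of_ne_zero_of_mul_left_eq_zero (sub_ne_zero_of_ne h1.symm) (by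
    rw [mul_neg_geom_sum, hω, sub_self])

namespace IsPrimitiveRoot

variable {K : Type*} [Field K] {ζ : K} {M : ℕ}

theorem pow_div_gcd (hζ : IsPrimitiveRoot ζ M) {t : ℕ} (ht : t ≠ 0) :
    IsPrimitiveRoot (ζ ^ t) (M / M.gcd t) := by
  rw [hζ.eq_orderOf, ← orderOf_pow' ζ ht]
  exact IsPrimitiveRoot.orderOf _

open Polynomial in
theorem aeval_eq_zero_iff [CharZero K] {ξ : K} (hζ : IsPrimitiveRoot ζ M) (hξ : IsPrimitiveRoot ξ M)
    (hM : 0 < M) (P : ℚ[X]) : aeval ζ P = 0 ↔ aeval ξ P = 0 := by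
  rw [← minpoly.dvd_iff, ← minpoly.dvd_iff, ← cyclotomic_eq_minpoly_rat hζ hM,
    ← cyclotomic_eq_minpoly_rat hξ hM]

open Polynomial in
theorem aeval_pow_eq_zero_of_forall_dvd [CharZero K] (hζ : IsPrimitiveRoot ζ M) {P : ℚ[X]}
    (hP : ∀ g, g ∣ M → 0 < g → g < M → aeval (ζ ^ g) P = 0) {t : ℕ} (ht : 0 < t) (htM : t < M) :
    aeval (ζ ^ t) P = 0 := by
  set g := M.gcd t
  have hg : 0 < g := Nat.gcd_pos_of_pos_right M ht
  have hgM : g < M := (Nat.gcd_le_right (m := M) ht).trans_lt htM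
  have hprim : IsPrimitiveRoot (ζ ^ g) (M / g) := by
    simpa [g, Nat.gcd_gcd_self_right_right] using hζ.pow_div_gcd hg.ne'
  rw [(hζ.pow_div_gcd ht.ne').aeval_eq_zero_iff hprim (Nat.div_pos hgM.le hg)]
  exact hP g (Nat.gcd_dvd_left M t) hg hgM

theorem geom_sum_pow_div_pow_eq_ite (hζ : IsPrimitiveRoot ζ M) {a b : ℕ} (ha : a < M)
    (hb : b < M) : ∑ i ∈ range M, (ζ ^ a / ζ ^ b) ^ i = if a = b then (M : K) else 0 := by
  have hζ0 : ζ ≠ 0 := hζ.ne_zero (by omega)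
  split_ifs with hab
  · simp [hab, hζ0]
  refine geom_sum_eq_zero_of_pow_eq_one ?_ ?_
  · rw [div_pow, pow_right_comm, hζ.pow_eq_one, pow_right_comm, hζ.pow_eq_one, one_pow, one_pow,
      div_one]
  · rw [Ne, div_eq_one_iff_eq (pow_ne_zero _ hζ0)]
    exact fun h => hab (hζ.pow_inj ha hb h)

theorem eq_empty_or_eq_univ_of_forall_sum_pow_eq_zero [CharZero K] (hζ : IsPrimitiveRoot ζ M)
    {J : Finset (Fin M)} (hJ : ∀ t, 0 < t → t < M → ∑ k ∈ J, (ζ ^ t) ^ (k : ℕ) = 0) :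
    J = ∅ ∨ J = univ := by
  rcases M.eq_zero_or_pos with rfl | hM
  · exact Or.inl (Subsingleton.elim _ _)
  have hsum (k : Fin M) :
      ∑ t ∈ range M, (ζ ^ (k : ℕ)) ^ t = if k = ⟨0, hM⟩ then (M : K) else 0 := by
    simpa [Fin.ext_iff] using hζ.geom_sum_pow_div_pow_eq_ite k.isLt hM
  have hcard : (#J : K) = if ⟨0, hM⟩ ∈ J then (M : K) else 0 := calc
    (#J : K) = ∑ t ∈ range M, ∑ k ∈ J, (ζ ^ t) ^ (k : ℕ) := by
      rw [sum_eq_single_of_mem 0 (mem_range.2 hM) fun t ht ht0 =>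
        hJ t (Nat.pos_of_ne_zero ht0) (mem_range.1 ht)]
      simp
    _ = ∑ k ∈ J, ∑ t ∈ range M, (ζ ^ (k : ℕ)) ^ t := by
      rw [sum_comm]
      exact sum_congr rfl fun _ _ => sum_congr rfl fun _ _ => pow_right_comm _ _ _
    _ = if ⟨0, hM⟩ ∈ J then (M : K) else 0 := by
      simp_rw [hsum, sum_ite_eq']
  split_ifs at hcard with h0
  · exact Or.inr (eq_univ_of_card J (by simpa using hcard))
  · exact Or.inl (card_eq_zero.1 (by exact_mod_cast hcard))

end IsPrimitiveRoot

def IsHarmonicFrame {N M : ℕ} (γ : ℂ) (Φ : Fin M → EuclideanSpace ℂ (Fin N)) : Prop :=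
  ∀ (k : Fin M) (n : Fin N), Φ k n = (1 / (Real.sqrt N : ℂ)) * γ ^ ((n : ℕ) * (k : ℕ))

namespace IsHarmonicFrame

variable {N M : ℕ} {γ : ℂ} {Φ : Fin M → EuclideanSpace ℂ (Fin N)}

theorem conj_mul (hΦ : IsHarmonicFrame γ Φ) (hγ : ‖γ‖ = 1) (k : Fin M) (n m : Fin N) :
    conj (Φ k n) * Φ k m = (N : ℂ)⁻¹ * (γ ^ (m : ℕ) / γ ^ (n : ℕ)) ^ (k : ℕ) := by
  have hsqrt : (Real.sqrt N : ℂ) * (Real.sqrt N : ℂ) = N := by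
    rw [← Complex.ofReal_mul, Real.mul_self_sqrt (Nat.cast_nonneg N), Complex.ofReal_natCast]
  rw [hΦ k n, hΦ k m, map_mul, map_pow, ← Complex.inv_eq_conj hγ, div_pow, ← hsqrt]
  simp only [map_div₀, map_one, Complex.conj_ofReal]
  ring

theorem sum_pow_eq_zero_of_isTightSub (hΦ : IsHarmonicFrame γ Φ) (hγ : ‖γ‖ = 1)
    {J : Finset (Fin M)} (hT : IsTightSub Φ J) {j : ℕ} (hj : 0 < j) (hjN : j < N) :
    ∑ k ∈ J, (γ ^ j) ^ (k : ℕ) = 0 := by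
  obtain ⟨A, -, hG⟩ := (isTightSub_iff Φ J).1 hT
  have h := hG ⟨0, by omega⟩ ⟨j, hjN⟩
  rw [if_neg (by simp [Fin.ext_iff]; omega)] at h
  simpa [hΦ.conj_mul hγ, ← mul_sum, show N ≠ 0 by omega] using h

open Polynomial in
theorem exists_dvd_of_isTightSub (hΦ : IsHarmonicFrame γ Φ) (hN : 0 < N)
    (hγ : IsPrimitiveRoot γ M) {J : Finset (Fin M)} (hJ : J ⊂ univ)
    (hT : IsTightSub Φ J) : ∃ d, d ∣ M ∧ N ≤ d ∧ d ≤ M - N := by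
  have hM : M ≠ 0 := by
    rintro rfl
    exact hJ.ne (Subsingleton.elim _ _)
  by_contra! hnd
  have hsmall : ∀ g, g ∣ M → g < M → g < N := fun g hg hgM => by
    by_contra! hNg
    exact (hnd g hg hNg).not_ge (Nat.le_sub_of_dvd_of_lt hg hgM hNg)
  have haeval : ∀ z : ℂ, aeval z (∑ k ∈ J, X ^ (k : ℕ) : ℚ[X]) = ∑ k ∈ J, z ^ (k : ℕ) := by
    simp
  have hroots : ∀ t, 0 < t → t < M → ∑ k ∈ J, (γ ^ t) ^ (k : ℕ) = 0 := by
    intro t ht htM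
    rw [← haeval]
    refine hγ.aeval_pow_eq_zero_of_forall_dvd (fun g hg hg0 hgM => ?_) ht htM
    rw [haeval]
    exact hΦ.sum_pow_eq_zero_of_isTightSub (hγ.norm'_eq_one hM) hT hg0 (hsmall g hg hgM)
  rcases hγ.eq_empty_or_eq_univ_of_forall_sum_pow_eq_zero hroots with rfl | rfl
  · exact (hT.nonempty hN).ne_empty rfl
  · exact hJ.ne rfl

theorem exists_isTightSub_card_eq (hΦ : IsHarmonicFrame γ Φ) (hN : 0 < N) (hM : 0 < M)
    (hγ : IsPrimitiveRoot γ M) {d : ℕ} (hd : d ∣ M) (hNd : N ≤ d) :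
    ∃ J : Finset (Fin M), #J = d ∧ IsTightSub Φ J := by
  have hnorm := hγ.norm'_eq_one hM.ne'
  obtain ⟨e, rfl⟩ := hd
  have he : 0 < e := Nat.pos_of_mul_pos_left hM
  have hζ : IsPrimitiveRoot (γ ^ e) d := hγ.pow hM (mul_comm d e)
  let f : Fin d ↪ Fin (d * e) :=
    ⟨fun i => ⟨i * e, Nat.mul_lt_mul_of_pos_right i.isLt he⟩,
      fun a b h => Fin.ext (Nat.eq_of_mul_eq_mul_right he (congrArg Fin.val h))⟩
  refine ⟨univ.map f, by simp, (isTightSub_iff Φ _).2 ⟨d / N, ?_, fun n m => ?_⟩⟩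
  · have : 0 < d := hN.trans_le hNd
    positivity
  have hterm : ∀ i : Fin d, conj (Φ (f i) n) * Φ (f i) m =
      (N : ℂ)⁻¹ * ((γ ^ e) ^ (m : ℕ) / (γ ^ e) ^ (n : ℕ)) ^ (i : ℕ) := by
    intro i
    rw [hΦ.conj_mul hnorm, show ((f i : Fin (d * e)) : ℕ) = i * e from rfl]
    simp only [div_pow, ← pow_mul]
    ring_nf
  rw [sum_map, sum_congr rfl fun i _ => hterm i, ← mul_sum,
    Fin.sum_univ_eq_sum_range (fun i => ((γ ^ e) ^ (m : ℕ) / (γ ^ e) ^ (n : ℕ)) ^ i),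
    hζ.geom_sum_pow_div_pow_eq_ite (m.isLt.trans_le hNd) (n.isLt.trans_le hNd)]
  by_cases hnm : n = m
  · simp [hnm, div_eq_inv_mul]
  · simp [hnm, Ne.symm hnm, Fin.val_inj]

end IsHarmonicFrame

theorem htf_prime_iff_no_divisor_general {N M : ℕ} (hN : 2 ≤ N)
    (γ : ℂ) (hγ : γ = Complex.exp (2 * Real.pi * Complex.I / M))
    (Φ : Fin M → EuclideanSpace ℂ (Fin N))
    (hΦ : ∀ (k : Fin M) (n : Fin N),
      Φ k n = (1 / (Real.sqrt N : ℂ)) * γ ^ ((n : ℕ) * (k : ℕ))) :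
    ((∃ J : Finset (Fin M), J ⊂ Finset.univ ∧ IsTightSub Φ J) ↔
        ∃ d : ℕ, d ∣ M ∧ N ≤ d ∧ d ≤ M - N) ∧
    ((∀ J : Finset (Fin M), J ⊂ Finset.univ → ¬ IsTightSub Φ J) ↔
        ¬ ∃ d : ℕ, d ∣ M ∧ N ≤ d ∧ d ≤ M - N) ∧
    (Nat.Prime M → ∀ J : Finset (Fin M), J ⊂ Finset.univ → ¬ IsTightSub Φ J) := by
  have hharm : IsHarmonicFrame γ Φ := hΦ
  have hprim : M ≠ 0 → IsPrimitiveRoot γ M := fun hM => hγ ▸ Complex.isPrimitiveRoot_exp M hM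
  have hdiv : (∃ J : Finset (Fin M), J ⊂ Finset.univ ∧ IsTightSub Φ J) ↔
      ∃ d : ℕ, d ∣ M ∧ N ≤ d ∧ d ≤ M - N := by
    constructor
    · rintro ⟨J, hJ, hT⟩
      have hM : M ≠ 0 := by
        rintro rfl
        exact hJ.ne (Subsingleton.elim _ _)
      exact hharm.exists_dvd_of_isTightSub (by omega) (hprim hM) hJ hT
    · rintro ⟨d, hd, hNd, hdM⟩
      obtain ⟨J, hJd, hT⟩ :=
        hharm.exists_isTightSub_card_eq (by omega) (by omega) (hprim (by omega)) hd hNd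
      refine ⟨J, ssubset_univ_iff.2 fun hJ => ?_, hT⟩
      rw [hJ, card_univ, Fintype.card_fin] at hJd
      omega
  refine ⟨hdiv, by simpa only [not_exists, not_and] using hdiv.not, fun hp J hJ hT => ?_⟩
  obtain ⟨d, hd, hNd, hdM⟩ := hdiv.1 ⟨J, hJ, hT⟩
  rcases hp.eq_one_or_self_of_dvd d hd with rfl | rfl <;> omega

/-- The harmonic tight frame of `M` vectors in `ℂ^N` (`N ≥ 2`) is divisible iff `M` has a
divisor `d` with `N ≤ d ≤ M − N`; equivalently it is prime iff no such divisor exists.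
In particular, if `M` is prime then the frame is prime. -/
theorem htf_prime_iff_no_divisor {N M : ℕ} (hN : 2 ≤ N) (hM : 1 ≤ M)
    (γ : ℂ) (hγ : γ = Complex.exp (2 * Real.pi * Complex.I / M))
    (Φ : Fin M → EuclideanSpace ℂ (Fin N))
    (hΦ : ∀ (k : Fin M) (n : Fin N),
      Φ k n = (1 / (Real.sqrt N : ℂ)) * γ ^ ((n : ℕ) * (k : ℕ))) :
    ((∃ J : Finset (Fin M), J ⊂ Finset.univ ∧ IsTightSub Φ J) ↔
        ∃ d : ℕ, d ∣ M ∧ N ≤ d ∧ d ≤ M - N) ∧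
    ((∀ J : Finset (Fin M), J ⊂ Finset.univ → ¬ IsTightSub Φ J) ↔
        ¬ ∃ d : ℕ, d ∣ M ∧ N ≤ d ∧ d ≤ M - N) ∧
    (Nat.Prime M → ∀ J : Finset (Fin M), J ⊂ Finset.univ → ¬ IsTightSub Φ J) :=
  htf_prime_iff_no_divisor_general hN γ hγ Φ hΦ
end

section
/- Let Φ = HTF(N,M) be the harmonic tight frame of M unit-norm vectors in ℂ^N, N ≥ 2, M > N. Then its worst-case coherence satisfies μ_Φ := max_{k≠ℓ} |⟨φ_k,φ_ℓ⟩| = (1/N)·sin(πN/M)/sin(π/M). -/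
open Finset Real ComplexConjugate

/-!
Write `θ = π / M`. The inner product `⟪φ_k, φ_ℓ⟫` is `1/N` times the geometric sum of the powers
`ζⁿ`, `n < N`, of `ζ = exp (2i(ℓ - k)θ)`, and `‖∑ ζⁿ‖ · |ζ - 1| = |ζᴺ - 1|` gives
`N ‖⟪φ_k, φ_ℓ⟫‖ |sin (dθ)| = |sin (Ndθ)|` with `d = ℓ - k`. So everything reduces to
`|sin (Ndθ)| sin θ ≤ |sin (Nθ)| |sin (dθ)|` for `N, d ≤ M`, with equality at `d = 1`.
Both sides are unchanged under `N ↦ M - N` and `d ↦ M - d`, so we may assume `2N, 2d ≤ M`.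
If `Nd ≤ M`, this is the fact that `sin (Nt) / sin t` decreases on `(0, π/N]`, proved by
induction on `N` through the addition formula. If `Nd > M`, Jordan's inequality
`sin x ≥ 2x/π` on `[0, π/2]` gives `sin (Nθ) sin (dθ) ≥ 4Nd/M² > π/M ≥ sin θ`.
-/

lemma sin_nat_mul_mul_sin_le_of_le {a b : ℝ} (ha : 0 ≤ a) (hab : a ≤ b) :
    ∀ {n : ℕ}, n * b ≤ π → sin (n * b) * sin a ≤ sin (n * a) * sin b
  | 0, _ => by simp
  | 1, _ => by simp [mul_comm]
  | n + 2, hb => by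
    set m : ℝ := ((n + 1 : ℕ) : ℝ) with hm
    have hm1 : 1 ≤ m := by rw [hm]; exact_mod_cast Nat.le_add_left 1 n
    have hb' : (m + 1) * b ≤ π := by rw [hm]; push_cast at hb ⊢; linarith
    have hb0 : 0 ≤ b := ha.trans hab
    have hmb : m * b ≤ π := by nlinarith
    have hma : m * a ≤ m * b := by gcongr
    have hbπ : b ≤ π / 2 := by nlinarith
    have ih := sin_nat_mul_mul_sin_le_of_le ha hab hmb
    have hsina : 0 ≤ sin a := sin_nonneg_of_nonneg_of_le_pi ha (by linarith)
    have hsinb : 0 ≤ sin b := sin_nonneg_of_nonneg_of_le_pi hb0 (by linarith)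
    have hsinma : 0 ≤ sin (m * a) := sin_nonneg_of_nonneg_of_le_pi (by positivity) (by linarith)
    have hcos : cos b ≤ cos a := cos_le_cos_of_nonneg_of_le_pi ha (by linarith) hab
    have hcosm : cos (m * b) ≤ cos (m * a) :=
      cos_le_cos_of_nonneg_of_le_pi (by positivity) hmb hma
    have hsin_term : sin (m * b) * sin a * cos b ≤ sin (m * a) * sin b * cos a :=
      (mul_le_mul_of_nonneg_right ih (cos_nonneg_of_mem_Icc ⟨by linarith, hbπ⟩)).trans
        (mul_le_mul_of_nonneg_left hcos (mul_nonneg hsinma hsinb))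
    have hcos_term : cos (m * b) * sin b * sin a ≤ cos (m * a) * sin a * sin b := by
      nlinarith [mul_le_mul_of_nonneg_right hcosm (mul_nonneg hsina hsinb)]
    rw [show ((n + 2 : ℕ) : ℝ) = m + 1 by rw [hm]; push_cast; ring, add_mul, add_mul, one_mul,
      one_mul, sin_add, sin_add]
    nlinarith

lemma abs_sin_sub_mul_mul_pi_div (M : ℕ) (a : ℝ) (b : ℕ) :
    |sin ((M - a) * b * (π / M))| = |sin (a * b * (π / M))| := by
  rcases eq_or_ne M 0 with rfl | hM
  · simp
  rw [show (M - a) * b * (π / M) = b * π - a * b * (π / M) by field_simp,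
    sin_nat_mul_pi_sub, abs_neg, abs_mul, abs_pow, abs_neg, abs_one, one_pow, one_mul]

lemma abs_sin_sub_mul_pi_div (M : ℕ) (a : ℝ) :
    |sin ((M - a) * (π / M))| = |sin (a * (π / M))| := by
  simpa using abs_sin_sub_mul_mul_pi_div M a 1

lemma sin_nat_mul_pi_div_nonneg {N M : ℕ} (h : N ≤ M) : 0 ≤ sin (N * (π / M)) := by
  refine sin_nonneg_of_nonneg_of_le_pi (by positivity) ?_
  rcases eq_or_ne M 0 with rfl | hM
  · simp [pi_pos.le]
  rw [mul_div_assoc', div_le_iff₀ (by positivity), mul_comm π]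
  exact mul_le_mul_of_nonneg_right (by exact_mod_cast h) pi_pos.le

lemma sin_nat_mul_pi_div_pos {d M : ℕ} (hd : 0 < d) (h : d < M) : 0 < sin (d * (π / M)) := by
  refine sin_pos_of_pos_of_lt_pi (by have : 0 < M := hd.trans h; positivity) ?_
  rw [mul_div_assoc', div_lt_iff₀ (by exact_mod_cast hd.trans h), mul_comm π]
  exact mul_lt_mul_of_pos_right (by exact_mod_cast h) pi_pos

lemma abs_sin_mul_mul_sin_le_of_two_mul_le {M N d : ℕ} (hN : 2 * N ≤ M) (hd : 2 * d ≤ M) :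
    |sin (N * d * (π / M))| * sin (π / M) ≤ |sin (N * (π / M))| * |sin (d * (π / M))| := by
  rcases Nat.eq_zero_or_pos d with rfl | hd0
  · simp
  have hM : (0 : ℝ) < M := by exact_mod_cast (by omega : 0 < M)
  have hθ : 0 < π / M := by positivity
  have hNθ : N * (π / M) ≤ π / 2 := by
    rw [mul_div_assoc', div_le_div_iff₀ hM two_pos]
    nlinarith [mul_le_mul_of_nonneg_left (by exact_mod_cast hN : 2 * (N : ℝ) ≤ M) pi_pos.le]
  have hdθ : d * (π / M) ≤ π / 2 := by
    rw [mul_div_assoc', div_le_div_iff₀ hM two_pos]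
    nlinarith [mul_le_mul_of_nonneg_left (by exact_mod_cast hd : 2 * (d : ℝ) ≤ M) pi_pos.le]
  have hθπ : π / M ≤ d * (π / M) := le_mul_of_one_le_left hθ.le (by exact_mod_cast hd0)
  have hsinN := sin_nat_mul_pi_div_nonneg (by omega : N ≤ M)
  have hsind := sin_nat_mul_pi_div_nonneg (by omega : d ≤ M)
  rw [abs_of_nonneg hsinN, abs_of_nonneg hsind]
  rcases le_or_gt (N * d) M with hNd | hNd
  · have hNdθ : N * (d * (π / M)) ≤ π := by
      rw [← mul_assoc, mul_div_assoc', div_le_iff₀ hM, mul_comm π]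
      exact mul_le_mul_of_nonneg_right (by exact_mod_cast hNd) pi_pos.le
    rw [mul_assoc, abs_of_nonneg (sin_nonneg_of_nonneg_of_le_pi (by positivity) hNdθ)]
    exact sin_nat_mul_mul_sin_le_of_le hθ.le hθπ hNdθ
  · have hNd' : (M : ℝ) + 1 ≤ N * d := by exact_mod_cast hNd
    calc |sin (N * d * (π / M))| * sin (π / M) ≤ 1 * (π / M) :=
          mul_le_mul (abs_sin_le_one _) (sin_le hθ.le) (sin_nonneg_of_nonneg_of_le_pi hθ.le
            (by linarith [pi_pos])) zero_le_one
      _ ≤ 2 / π * (N * (π / M)) * (2 / π * (d * (π / M))) := by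
          rw [show 2 / π * (N * (π / M)) * (2 / π * (d * (π / M))) = 4 * (N * d) / M ^ 2 by
            field_simp; ring, one_mul, div_le_div_iff₀ hM (by positivity)]
          nlinarith [pi_le_four]
      _ ≤ sin (N * (π / M)) * sin (d * (π / M)) :=
          mul_le_mul (mul_le_sin (by positivity) hNθ) (mul_le_sin (by positivity) hdθ)
            (by positivity) hsinN

lemma abs_sin_mul_mul_sin_le {M N d : ℕ} (hN : N ≤ M) (hd : d ≤ M) :
    |sin (N * d * (π / M))| * sin (π / M) ≤ |sin (N * (π / M))| * |sin (d * (π / M))| := by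
  wlog h2N : 2 * N ≤ M generalizing N
  · have h := this (N := M - N) (Nat.sub_le M N) (by omega)
    rwa [Nat.cast_sub hN, abs_sin_sub_mul_mul_pi_div, abs_sin_sub_mul_pi_div] at h
  wlog h2d : 2 * d ≤ M generalizing d
  · have h := this (d := M - d) (Nat.sub_le M d) (by omega)
    rwa [Nat.cast_sub hd, mul_comm (N : ℝ), abs_sin_sub_mul_mul_pi_div, abs_sin_sub_mul_pi_div,
      mul_comm (d : ℝ)] at h
  exact abs_sin_mul_mul_sin_le_of_two_mul_le h2N h2d

lemma norm_geom_sum_exp_mul_abs_sin (N : ℕ) (x : ℝ) :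
    ‖∑ n ∈ range N, Complex.exp (Complex.I * x) ^ n‖ * |sin (x / 2)| = |sin (N * x / 2)| := by
  have h := congrArg norm (geom_sum_mul (Complex.exp (Complex.I * x)) N)
  rw [← Complex.exp_nat_mul, show (N : ℂ) * (Complex.I * x) = Complex.I * (N * x : ℝ) by
    push_cast; ring, norm_mul, Complex.norm_exp_I_mul_ofReal_sub_one,
    Complex.norm_exp_I_mul_ofReal_sub_one, norm_mul, norm_mul] at h
  simp only [Real.norm_ofNat, Real.norm_eq_abs] at h
  linarith

lemma inner_eq_geom_sum {N : ℕ} (c : ℝ) (α β : ℂ) (u v : EuclideanSpace ℂ (Fin N))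
    (hu : ∀ n : Fin N, u n = c * α ^ (n : ℕ)) (hv : ∀ n : Fin N, v n = c * β ^ (n : ℕ)) :
    inner ℂ u v = c ^ 2 * ∑ n ∈ range N, (conj α * β) ^ n := by
  rw [PiLp.inner_apply, mul_sum, ← Fin.sum_univ_eq_sum_range]
  refine sum_congr rfl fun n _ => ?_
  rw [RCLike.inner_apply, hu, hv, map_mul, map_pow, Complex.conj_ofReal, mul_pow]
  ring

lemma conj_pow_mul_pow_exp {M : ℕ} (k ℓ : ℕ) :
    conj (Complex.exp (2 * π * Complex.I / M) ^ k) * Complex.exp (2 * π * Complex.I / M) ^ ℓ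
      = Complex.exp (Complex.I * ((ℓ - k : ℝ) * (2 * π / M) : ℝ)) := by
  rw [← Complex.exp_nat_mul, ← Complex.exp_nat_mul, ← Complex.exp_conj, ← Complex.exp_add]
  congr 1
  simp only [map_mul, map_div₀, map_natCast, map_ofNat, Complex.conj_ofReal, Complex.conj_I]
  push_cast
  ring

lemma htf_norm_inner_mul_abs_sin {N M : ℕ} {γ : ℂ} (hγ : γ = Complex.exp (2 * π * Complex.I / M))
    {Φ : Fin M → EuclideanSpace ℂ (Fin N)}
    (hΦ : ∀ (k : Fin M) (n : Fin N), Φ k n = (1 / (√N : ℂ)) * γ ^ ((n : ℕ) * (k : ℕ)))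
    (k ℓ : Fin M) :
    ‖inner ℂ (Φ k) (Φ ℓ)‖ * (N * |sin ((ℓ - k : ℝ) * (π / M))|)
      = |sin (N * (ℓ - k : ℝ) * (π / M))| := by
  rcases eq_or_ne N 0 with rfl | hN
  · simp
  have hvec : ∀ j : Fin M, ∀ n : Fin N, Φ j n = ((1 / √N : ℝ) : ℂ) * (γ ^ (j : ℕ)) ^ (n : ℕ) :=
    fun j n => by rw [hΦ, pow_mul']; push_cast; rfl
  have hsum := norm_geom_sum_exp_mul_abs_sin N ((ℓ - k : ℝ) * (2 * π / M))
  rw [show (ℓ - k : ℝ) * (2 * π / M) / 2 = (ℓ - k : ℝ) * (π / M) by ring,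
    show N * ((ℓ - k : ℝ) * (2 * π / M)) / 2 = N * (ℓ - k : ℝ) * (π / M) by ring] at hsum
  rw [inner_eq_geom_sum _ _ _ _ _ (hvec k) (hvec ℓ), hγ, conj_pow_mul_pow_exp, ← hsum, norm_mul,
    norm_pow, Complex.norm_real, Real.norm_eq_abs, sq_abs, div_pow, one_pow,
    sq_sqrt (Nat.cast_nonneg N)]
  field_simp

lemma htf_norm_inner_mul_sin_le {N M : ℕ} (hNM : N ≤ M) {γ : ℂ}
    (hγ : γ = Complex.exp (2 * π * Complex.I / M)) {Φ : Fin M → EuclideanSpace ℂ (Fin N)}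
    (hΦ : ∀ (k : Fin M) (n : Fin N), Φ k n = (1 / (√N : ℂ)) * γ ^ ((n : ℕ) * (k : ℕ)))
    {k ℓ : Fin M} (hkl : k ≠ ℓ) :
    ‖inner ℂ (Φ k) (Φ ℓ)‖ * (N * sin (π / M)) ≤ sin (N * (π / M)) := by
  wlog hlt : k < ℓ generalizing k ℓ
  · rw [norm_inner_symm]
    exact this hkl.symm (lt_of_le_of_ne (not_lt.1 hlt) hkl.symm)
  have hlt' : (k : ℕ) < ℓ := hlt
  have hsind := sin_nat_mul_pi_div_pos (Nat.sub_pos_of_lt hlt') (by omega : (ℓ : ℕ) - k < M)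
  have hmul := htf_norm_inner_mul_abs_sin hγ hΦ k ℓ
  have key := abs_sin_mul_mul_sin_le (N := N) (d := (ℓ : ℕ) - k) hNM (by omega)
  rw [← Nat.cast_sub hlt'.le, ← mul_assoc, abs_of_pos hsind] at hmul
  rw [← hmul, abs_of_pos hsind, abs_of_nonneg (sin_nat_mul_pi_div_nonneg hNM)] at key
  refine le_of_mul_le_mul_right ?_ hsind
  linarith

/-- The worst-case coherence of the harmonic tight frame `HTF(N,M)`, `M > N ≥ 2`, is
`(1/N)·sin(πN/M)/sin(π/M)`. -/
theorem htf_coherence {N M : ℕ} (hN : 2 ≤ N) (hM : N < M)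
    (γ : ℂ) (hγ : γ = Complex.exp (2 * Real.pi * Complex.I / M))
    (Φ : Fin M → EuclideanSpace ℂ (Fin N))
    (hΦ : ∀ (k : Fin M) (n : Fin N),
      Φ k n = (1 / (Real.sqrt N : ℂ)) * γ ^ ((n : ℕ) * (k : ℕ))) :
    (⨆ q : {q : Fin M × Fin M // q.1 ≠ q.2}, ‖(inner ℂ (Φ q.val.1) (Φ q.val.2) : ℂ)‖)
      = (1 / N) * (Real.sin (Real.pi * N / M) / Real.sin (Real.pi / M)) := by
  have hsin : 0 < sin (π / M) := by
    simpa using sin_nat_mul_pi_div_pos (d := 1) one_pos (by omega : 1 < M)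
  have hpos : 0 < (N : ℝ) * sin (π / M) := mul_pos (by exact_mod_cast (by omega : 0 < N)) hsin
  let q₀ : {q : Fin M × Fin M // q.1 ≠ q.2} :=
    ⟨(⟨0, by omega⟩, ⟨1, by omega⟩), by simp [Fin.ext_iff]⟩
  have hq₀ : ‖inner ℂ (Φ q₀.1.1) (Φ q₀.1.2)‖ * (N * sin (π / M)) = sin (N * (π / M)) := by
    have := htf_norm_inner_mul_abs_sin hγ hΦ q₀.1.1 q₀.1.2
    simpa [q₀, abs_of_nonneg (sin_nat_mul_pi_div_nonneg hM.le), abs_of_pos hsin] using this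
  have : Nonempty {q : Fin M × Fin M // q.1 ≠ q.2} := ⟨q₀⟩
  rw [show 1 / (N : ℝ) * (sin (π * N / M) / sin (π / M))
      = sin (N * (π / M)) / (N * sin (π / M)) by field_simp]
  exact le_antisymm
    (ciSup_le fun q => (le_div_iff₀ hpos).2 (htf_norm_inner_mul_sin_le hM.le hγ hΦ q.2))
    (le_ciSup_of_le (Set.finite_range _).bddAbove q₀ ((div_le_iff₀ hpos).2 hq₀.ge))
end

section
/- Let d | M with d ≥ N, and let U = diag(γ⁰, γ¹, …, γ^{N−1}) where γ = e^{2πi/M}. Let Φ₁ = {φ_i : i ∈ I(d,1)} be the tight subframe of the harmonic frame HTF(N,M) indexed by I(d,1) = {kM/d + 1 : 0 ≤ k ≤ d−1}. Then for each q = 1,…,M/d, the subcollection {φ_i : i ∈ I(d,q)}, I(d,q) = {kM/d + q : 0 ≤ k ≤ d−1}, equals U^{q−1}Φ₁ (as a set of vectors, i.e., φ_{kM/d+q} = U^{q−1} φ_{kM/d+1}), and in particular each {φ_i : i ∈ I(d,q)} is a tight frame for ℂ^N with bound d/N. Consequently HTF(N,M) is a disjoint union of M/d tight frames of d vectors each.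 -/
open Finset

/-! With `s = M / d`, the vector `φ_{ks+q}` has entries `γ^{nq} ω^{nk} / √N`, where `ω = γ^s` is a
primitive `d`-th root of unity. The factor `γ^{nq}` is the diagonal matrix `U^q`, and the factor
`ω^{nk}` makes the block a piece of the `d`-point DFT: since `N ≤ d`, the rows `(ω^{nk})_{k<d}` for
distinct `n < N` are orthogonal, which gives `∑_k |⟨x, φ_{ks+q}⟩|² = (d/N) ‖x‖²`. -/

open ComplexConjugate
open scoped Matrix

theorem IsPrimitiveRoot.sum_pow_mul_conj_pow {ω : ℂ} {d : ℕ} (hω : IsPrimitiveRoot ω d)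
    {n m : ℕ} (hn : n < d) (hm : m < d) :
    ∑ k ∈ range d, ω ^ (n * k) * conj (ω ^ (m * k)) = if n = m then (d : ℂ) else 0 := by
  have hω0 : ω ≠ 0 := hω.ne_zero (by omega)
  have hconj : conj ω = ω⁻¹ := (Complex.inv_eq_conj (hω.norm'_eq_one (by omega))).symm
  set z := ω ^ n * ω⁻¹ ^ m with hz
  have hsummand (k : ℕ) : ω ^ (n * k) * conj (ω ^ (m * k)) = z ^ k := by
    rw [map_pow, hconj, mul_pow, ← pow_mul, ← pow_mul]
  simp_rw [hsummand]
  split_ifs with hnm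
  · simp [z, hnm, hω0]
  · have hz1 : z ≠ 1 := by
      intro h
      refine hnm (hω.pow_inj hn hm ?_)
      rwa [hz, inv_pow, mul_inv_eq_one₀ (pow_ne_zero _ hω0)] at h
    have hzd : z ^ d = 1 := by
      rw [mul_pow, ← pow_mul, ← pow_mul, mul_comm n, mul_comm m, pow_mul, pow_mul, inv_pow,
        hω.pow_eq_one, one_pow, inv_one, one_pow, one_mul]
    rw [geom_sum_eq hz1, hzd, sub_self, zero_div]

theorem IsPrimitiveRoot.sum_norm_sq_sum_mul_pow {ω : ℂ} {d N : ℕ} (hω : IsPrimitiveRoot ω d)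
    (hN : N ≤ d) (a : Fin N → ℂ) :
    ∑ k ∈ range d, ‖∑ n, a n * ω ^ ((n : ℕ) * k)‖ ^ 2 = d * ∑ n, ‖a n‖ ^ 2 := by
  apply Complex.ofReal_injective
  push_cast
  simp_rw [← Complex.mul_conj', map_sum, sum_mul_sum, mul_sum]
  calc ∑ k ∈ range d, ∑ n, ∑ m, a n * ω ^ ((n : ℕ) * k) * conj (a m * ω ^ ((m : ℕ) * k))
      = ∑ n, ∑ m, a n * conj (a m) *
          ∑ k ∈ range d, ω ^ ((n : ℕ) * k) * conj (ω ^ ((m : ℕ) * k)) := by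
        rw [sum_comm]
        refine sum_congr rfl fun n _ => ?_
        rw [sum_comm]
        refine sum_congr rfl fun m _ => ?_
        rw [mul_sum]
        refine sum_congr rfl fun k _ => ?_
        rw [map_mul]
        ring
    _ = ∑ n, (d : ℂ) * (a n * conj (a n)) := by
        refine sum_congr rfl fun n _ => ?_
        rw [sum_eq_single n]
        · rw [hω.sum_pow_mul_conj_pow (n.2.trans_le hN) (n.2.trans_le hN), if_pos rfl, mul_comm]
        · intro m _ hmn
          rw [hω.sum_pow_mul_conj_pow (n.2.trans_le hN) (m.2.trans_le hN),
            if_neg (Fin.val_injective.ne hmn.symm), mul_zero]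
        · simp

theorem Fin.sum_filter_mod_eq {β : Type*} [AddCommMonoid β] {M d s q : ℕ} (hds : d * s = M)
    (hq : q < s) (g : ℕ → β) :
    ∑ i ∈ univ.filter (fun i : Fin M => (i : ℕ) % s = q), g i = ∑ k ∈ range d, g (k * s + q) := by
  rw [sum_filter, Fin.sum_univ_eq_sum_range (fun i => if i % s = q then g i else 0), ← sum_filter]
  have hs : 0 < s := by omega
  refine sum_nbij' (· / s) (· * s + q) ?_ ?_ ?_ ?_ ?_
  · intro i hi
    simp only [mem_filter, mem_range] at hi ⊢
    rw [Nat.div_lt_iff_lt_mul hs]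
    omega
  · intro k hk
    simp only [mem_filter, mem_range] at hk ⊢
    refine ⟨by nlinarith, by simp [Nat.add_mod, Nat.mod_eq_of_lt hq]⟩
  · intro i hi
    simp only [mem_filter] at hi
    rw [← hi.2, Nat.div_add_mod']
  · intro k _
    rw [add_comm, Nat.add_mul_div_right _ _ hs, Nat.div_eq_of_lt hq, zero_add]
  · intro i hi
    simp only [mem_filter] at hi
    rw [← hi.2, Nat.div_add_mod']

theorem Fin.card_filter_mod_eq {M d s q : ℕ} (hds : d * s = M) (hq : q < s) :
    (univ.filter (fun i : Fin M => (i : ℕ) % s = q)).card = d := by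
  rw [card_eq_sum_ones, Fin.sum_filter_mod_eq hds hq (fun _ => 1)]
  simp

/-- `harmonicVector N γ j` is the paper's `φ_{j+1}`. -/
noncomputable def harmonicVector (N : ℕ) (γ : ℂ) (j : ℕ) : EuclideanSpace ℂ (Fin N) :=
  WithLp.toLp 2 fun n => 1 / (Real.sqrt N : ℂ) * γ ^ ((n : ℕ) * j)

theorem harmonicVector_add_eq_diagonal_pow_mulVec (N : ℕ) (γ : ℂ) (j q : ℕ) :
    (harmonicVector N γ (j + q)).ofLp =
      (Matrix.diagonal fun n : Fin N => γ ^ (n : ℕ)) ^ q *ᵥ (harmonicVector N γ j).ofLp := by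
  ext n
  simp only [harmonicVector, Matrix.diagonal_pow, Matrix.mulVec_diagonal, Pi.pow_apply]
  ring

theorem inner_harmonicVector (N : ℕ) (γ : ℂ) (j : ℕ) (x : EuclideanSpace ℂ (Fin N)) :
    inner ℂ x (harmonicVector N γ j) =
      1 / (Real.sqrt N : ℂ) * ∑ n, conj (x n) * γ ^ ((n : ℕ) * j) := by
  simp only [PiLp.inner_apply, RCLike.inner_apply, harmonicVector, mul_sum]
  refine sum_congr rfl fun n _ => ?_
  ring

theorem sum_norm_inner_harmonicVector_sq {N M d s : ℕ} {γ : ℂ} (hγ : IsPrimitiveRoot γ M)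
    (hM : M ≠ 0) (hds : d * s = M) (hN : N ≤ d) (q : ℕ) (x : EuclideanSpace ℂ (Fin N)) :
    ∑ k ∈ range d, ‖inner ℂ x (harmonicVector N γ (k * s + q))‖ ^ 2 = d / N * ‖x‖ ^ 2 := by
  have hω : IsPrimitiveRoot (γ ^ s) d := hγ.pow (Nat.pos_of_ne_zero hM) (by rw [← hds, mul_comm])
  have hγ1 : ‖γ‖ = 1 := hγ.norm'_eq_one hM
  have hinner (k : ℕ) : inner ℂ x (harmonicVector N γ (k * s + q)) =
      1 / (Real.sqrt N : ℂ) *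
        ∑ n : Fin N, conj (x n) * γ ^ ((n : ℕ) * q) * (γ ^ s) ^ ((n : ℕ) * k) := by
    rw [inner_harmonicVector]
    congr 1
    refine sum_congr rfl fun n _ => ?_
    ring
  calc ∑ k ∈ range d, ‖inner ℂ x (harmonicVector N γ (k * s + q))‖ ^ 2
      = ∑ k ∈ range d,
          ‖∑ n : Fin N, conj (x n) * γ ^ ((n : ℕ) * q) * (γ ^ s) ^ ((n : ℕ) * k)‖ ^ 2 / N := by
        simp [hinner, mul_pow, div_eq_inv_mul]
    _ = d / N * ‖x‖ ^ 2 := by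
        rw [← sum_div, hω.sum_norm_sq_sum_mul_pow hN, EuclideanSpace.norm_sq_eq]
        simp [hγ1]
        ring

theorem htf_blocks_are_unitary_images_general {N M : ℕ}
    (d : ℕ) (hdvd : d ∣ M) (hdN : N ≤ d)
    (γ : ℂ) (hγ : γ = Complex.exp (2 * Real.pi * Complex.I / M))
    (Φ : Fin M → EuclideanSpace ℂ (Fin N))
    (hΦ : ∀ (k : Fin M) (n : Fin N),
      Φ k n = (1 / (Real.sqrt N : ℂ)) * γ ^ ((n : ℕ) * (k : ℕ)))
    (U : Matrix (Fin N) (Fin N) ℂ)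
    (hU : U = Matrix.diagonal fun n : Fin N => γ ^ (n : ℕ)) :
    (∀ (q k : ℕ), q < M / d → k < d →
      ∀ (hi : k * (M / d) + q < M) (hi0 : k * (M / d) < M) (n : Fin N),
        Φ ⟨k * (M / d) + q, hi⟩ n = Matrix.mulVec (U ^ q) (Φ ⟨k * (M / d), hi0⟩) n) ∧
    (∀ q : ℕ, q < M / d → ∀ x : EuclideanSpace ℂ (Fin N),
      ∑ i ∈ Finset.univ.filter (fun i : Fin M => (i : ℕ) % (M / d) = q),
        ‖(inner ℂ x (Φ i) : ℂ)‖ ^ 2 = ((d : ℝ) / N) * ‖x‖ ^ 2) ∧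
    (∀ q : ℕ, q < M / d →
      (Finset.univ.filter (fun i : Fin M => (i : ℕ) % (M / d) = q)).card = d) ∧
    (∀ q q' : ℕ, q ≠ q' →
      Disjoint (Finset.univ.filter (fun i : Fin M => (i : ℕ) % (M / d) = q))
        (Finset.univ.filter (fun i : Fin M => (i : ℕ) % (M / d) = q'))) ∧
    Finset.univ = (Finset.range (M / d)).biUnion
      (fun q => Finset.univ.filter fun i : Fin M => (i : ℕ) % (M / d) = q) := by
  have hds : d * (M / d) = M := Nat.mul_div_cancel' hdvd
  have hΦ' (i : Fin M) : Φ i = harmonicVector N γ i := by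
    ext n
    rw [hΦ]
    rfl
  refine ⟨fun q k _ _ _ _ n => ?_, fun q hq x => ?_, fun q hq => Fin.card_filter_mod_eq hds hq,
    fun q q' hqq' => disjoint_filter.2 fun i _ h h' => hqq' (h.symm.trans h'), ?_⟩
  · rw [hΦ', hΦ', hU]
    exact congrFun (harmonicVector_add_eq_diagonal_pow_mulVec N γ _ q) n
  · have hM : M ≠ 0 := by rintro rfl; simp at hq
    simp_rw [hΦ']
    rw [Fin.sum_filter_mod_eq hds hq (fun j => ‖inner ℂ x (harmonicVector N γ j)‖ ^ 2)]
    exact sum_norm_inner_harmonicVector_sq (hγ ▸ Complex.isPrimitiveRoot_exp M hM) hM hds hdN q x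
  · refine (biUnion_filter_eq_of_maps_to fun i _ => mem_range.2 (Nat.mod_lt _ ?_)).symm
    exact Nat.pos_of_mul_pos_left (hds ▸ i.pos)

/-- For a divisor `d ≥ N` of `M`, with `U = diag(γ⁰,…,γ^{N−1})`, each block
`{φ_i : i ≡ q mod M/d}` of the harmonic frame equals `U^q` applied to the block
`{φ_i : i ≡ 0 mod M/d}`, each such block is a tight frame with bound `d/N`, and the
blocks form a disjoint partition of the frame into `M/d` tight frames of `d` vectors. -/
theorem htf_blocks_are_unitary_images {N M : ℕ} (hN : 1 ≤ N) (hM : 1 ≤ M)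
    (d : ℕ) (hdvd : d ∣ M) (hdN : N ≤ d)
    (γ : ℂ) (hγ : γ = Complex.exp (2 * Real.pi * Complex.I / M))
    (Φ : Fin M → EuclideanSpace ℂ (Fin N))
    (hΦ : ∀ (k : Fin M) (n : Fin N),
      Φ k n = (1 / (Real.sqrt N : ℂ)) * γ ^ ((n : ℕ) * (k : ℕ)))
    (U : Matrix (Fin N) (Fin N) ℂ)
    (hU : U = Matrix.diagonal fun n : Fin N => γ ^ (n : ℕ)) :
    (∀ (q k : ℕ), q < M / d → k < d →
      ∀ (hi : k * (M / d) + q < M) (hi0 : k * (M / d) < M) (n : Fin N),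
        Φ ⟨k * (M / d) + q, hi⟩ n = Matrix.mulVec (U ^ q) (Φ ⟨k * (M / d), hi0⟩) n) ∧
    (∀ q : ℕ, q < M / d → ∀ x : EuclideanSpace ℂ (Fin N),
      ∑ i ∈ Finset.univ.filter (fun i : Fin M => (i : ℕ) % (M / d) = q),
        ‖(inner ℂ x (Φ i) : ℂ)‖ ^ 2 = ((d : ℝ) / N) * ‖x‖ ^ 2) ∧
    (∀ q : ℕ, q < M / d →
      (Finset.univ.filter (fun i : Fin M => (i : ℕ) % (M / d) = q)).card = d) ∧
    (∀ q q' : ℕ, q ≠ q' →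
      Disjoint (Finset.univ.filter (fun i : Fin M => (i : ℕ) % (M / d) = q))
        (Finset.univ.filter (fun i : Fin M => (i : ℕ) % (M / d) = q'))) ∧
    Finset.univ = (Finset.range (M / d)).biUnion
      (fun q => Finset.univ.filter fun i : Fin M => (i : ℕ) % (M / d) = q) :=
  htf_blocks_are_unitary_images_general d hdvd hdN γ hγ Φ hΦ U hU
end

section
/- Let N ≤ p ≤ M − N with N ≥ 2, and suppose Φ = {φ_i}_{i=1}^M is a tight frame for K^N of not-all-equal-norm vectors such that every subcollection of p vectors of Φ is a tight frame. Then a contradiction ensues; i.e., no such non-equal-norm tight frame exists. More precisely: if Φ is a tight frame and every p-element subcollection is tight, and there exist indices with ‖φ_j‖ ≠ ‖φ_k‖, then N = 1. -/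
/-!
If `φ_j` and `φ_k` can be swapped inside a tight `p`-subset, then
`|⟨x, φ_j⟩|² - |⟨x, φ_k⟩|² = c ‖x‖²` for all `x`. Taking the trace of this identity over an
orthonormal basis gives `c N = ‖φ_j‖² - ‖φ_k‖²`, while evaluating it at `x = φ_j` and `x = φ_k`
and adding gives `c = ‖φ_j‖² - ‖φ_k‖²`. When the norms differ, `c ≠ 0` and hence `N = 1`.
-/

open Finset

section InnerProductSpace

variable {𝕜 E : Type*} [RCLike 𝕜] [NormedAddCommGroup E] [InnerProductSpace 𝕜 E]

lemma sq_norm_sub_sq_norm_eq_mul_finrank [FiniteDimensional 𝕜 E] {u v : E} {c : ℝ}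
    (h : ∀ x : E, ‖(inner 𝕜 x u : 𝕜)‖ ^ 2 - ‖(inner 𝕜 x v : 𝕜)‖ ^ 2 = c * ‖x‖ ^ 2) :
    ‖u‖ ^ 2 - ‖v‖ ^ 2 = c * Module.finrank 𝕜 E := by
  let b := stdOrthonormalBasis 𝕜 E
  calc ‖u‖ ^ 2 - ‖v‖ ^ 2
      = ∑ n, (‖(inner 𝕜 (b n) u : 𝕜)‖ ^ 2 - ‖(inner 𝕜 (b n) v : 𝕜)‖ ^ 2) := by
        rw [sum_sub_distrib, b.sum_sq_norm_inner_right, b.sum_sq_norm_inner_right]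
    _ = ∑ n, c * ‖b n‖ ^ 2 := sum_congr rfl fun n _ ↦ h (b n)
    _ = c * Module.finrank 𝕜 E := by simp [b.orthonormal.1, mul_comm]

lemma eq_sq_norm_sub_sq_norm_of_sq_norm_inner_sub_eq {u v : E} {c : ℝ} (huv : ‖u‖ ≠ ‖v‖)
    (h : ∀ x : E, ‖(inner 𝕜 x u : 𝕜)‖ ^ 2 - ‖(inner 𝕜 x v : 𝕜)‖ ^ 2 = c * ‖x‖ ^ 2) :
    c = ‖u‖ ^ 2 - ‖v‖ ^ 2 := by
  have hsq : ‖u‖ ^ 2 ≠ ‖v‖ ^ 2 :=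
    (pow_left_inj₀ (norm_nonneg u) (norm_nonneg v) two_ne_zero).not.mpr huv
  have hpos : 0 < ‖u‖ ^ 2 + ‖v‖ ^ 2 :=
    lt_of_le_of_ne (by positivity) fun h0 ↦ hsq (by linarith [sq_nonneg ‖u‖, sq_nonneg ‖v‖])
  have hu := h u
  have hv := h v
  rw [inner_self_eq_norm_sq_to_K, norm_pow, RCLike.norm_ofReal, abs_norm] at hu
  rw [inner_self_eq_norm_sq_to_K, norm_pow, RCLike.norm_ofReal, abs_norm, ← inner_conj_symm,
    RCLike.norm_conj] at hv
  refine mul_right_cancel₀ hpos.ne' ?_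
  linear_combination -hu - hv

lemma finrank_eq_one_of_sq_norm_inner_sub_eq [FiniteDimensional 𝕜 E] {u v : E} {c : ℝ}
    (huv : ‖u‖ ≠ ‖v‖)
    (h : ∀ x : E, ‖(inner 𝕜 x u : 𝕜)‖ ^ 2 - ‖(inner 𝕜 x v : 𝕜)‖ ^ 2 = c * ‖x‖ ^ 2) :
    Module.finrank 𝕜 E = 1 := by
  have hc := eq_sq_norm_sub_sq_norm_of_sq_norm_inner_sub_eq huv h
  have htrace := sq_norm_sub_sq_norm_eq_mul_finrank h
  have hc0 : c ≠ 0 := by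
    rw [hc, sub_ne_zero]
    exact (pow_left_inj₀ (norm_nonneg u) (norm_nonneg v) two_ne_zero).not.mpr huv
  rw [← hc] at htrace
  exact_mod_cast (mul_eq_left₀ hc0).mp htrace.symm

end InnerProductSpace

lemma Finset.exists_card_eq_notMem_notMem {α : Type*} [Fintype α] [DecidableEq α] (a b : α)
    {n : ℕ} (hn : n + 2 ≤ Fintype.card α) :
    ∃ S : Finset α, a ∉ S ∧ b ∉ S ∧ S.card = n := by
  have : n ≤ (univ \ {a, b}).card := by
    rw [card_sdiff_of_subset (subset_univ _), card_univ]
    have hab : ({a, b} : Finset α).card ≤ 2 := card_le_two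
    omega
  obtain ⟨S, hS, hcard⟩ := exists_subset_card_eq this
  exact ⟨S, fun ha ↦ by simpa using hS ha, fun hb ↦ by simpa using hS hb, hcard⟩

lemma IsTightSub.exists_sq_norm_inner_sub_eq {K : Type*} [RCLike K] {N M : ℕ}
    {Φ : Fin M → EuclideanSpace K (Fin N)} {S : Finset (Fin M)} {j k : Fin M}
    (hj : j ∉ S) (hk : k ∉ S) (hjS : IsTightSub Φ (insert j S))
    (hkS : IsTightSub Φ (insert k S)) :
    ∃ c : ℝ, ∀ x : EuclideanSpace K (Fin N),
      ‖(inner K x (Φ j) : K)‖ ^ 2 - ‖(inner K x (Φ k) : K)‖ ^ 2 = c * ‖x‖ ^ 2 := by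
  obtain ⟨A, -, hA⟩ := hjS
  obtain ⟨B, -, hB⟩ := hkS
  refine ⟨A - B, fun x ↦ ?_⟩
  have hAx := hA x
  have hBx := hB x
  rw [sum_insert hj] at hAx
  rw [sum_insert hk] at hBx
  linarith

theorem no_nonequal_norm_frame_with_all_p_subsets_tight_general {K : Type*} [RCLike K]
    {N M : ℕ} (p : ℕ) (hp1 : N ≤ p) (hp2 : p ≤ M - N)
    (Φ : Fin M → EuclideanSpace K (Fin N))
    (hall : ∀ J : Finset (Fin M), J.card = p → IsTightSub Φ J)
    (j k : Fin M) (hjk : ‖Φ j‖ ≠ ‖Φ k‖) :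
    N = 1 := by
  have hN : N ≠ 0 := by
    rintro rfl
    exact hjk (congrArg norm (Subsingleton.elim (Φ j) (Φ k)))
  obtain ⟨S, hjS, hkS, hS⟩ :=
    exists_card_eq_notMem_notMem j k (n := p - 1) (by rw [Fintype.card_fin]; omega)
  have hcard : ∀ i ∉ S, (insert i S).card = p := fun i hi ↦ by
    rw [card_insert_of_notMem hi, hS]; omega
  obtain ⟨c, hc⟩ := IsTightSub.exists_sq_norm_inner_sub_eq hjS hkS
    (hall _ (hcard j hjS)) (hall _ (hcard k hkS))
  simpa using finrank_eq_one_of_sq_norm_inner_sub_eq hjk hc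

/-- A tight frame for `K^N` in which every subcollection of `p` vectors
(`N ≤ p ≤ M − N`) is tight and which contains two vectors of different norms can only
exist when `N = 1`. -/
theorem no_nonequal_norm_frame_with_all_p_subsets_tight {K : Type*} [RCLike K]
    {N M : ℕ} (p : ℕ) (hp1 : N ≤ p) (hp2 : p ≤ M - N)
    (Φ : Fin M → EuclideanSpace K (Fin N)) (hΦ : IsTightSub Φ Finset.univ)
    (hall : ∀ J : Finset (Fin M), J.card = p → IsTightSub Φ J)
    (j k : Fin M) (hjk : ‖Φ j‖ ≠ ‖Φ k‖) :
    N = 1 :=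
  no_nonequal_norm_frame_with_all_p_subsets_tight_general p hp1 hp2 Φ hall j k hjk
end
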